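/- arXiv:1805.07250 — 5 statements merged into one kernel-verified Lean document; each statement's English description precedes it below -/
import Mathlib

section
/- Let F be a field and X a sequence of m+n pairwise distinct elements of F. For any partitions μ and ν with l(μ) ≤ m and l(ν) ≤ n, s_{μ ⋆_{m,n} ν}(X) = Σ_{S,T} ε_{m,n}(μ, ν) · s_μ(S) · s_ν(T) / Δ(S; T), where the sum ranges over all decompositions of X into complementary subsequences S of length m and T of length n (i.e., S = X_I and T = X_{I^c} for an m-element subset I of the index set); when μ ⋆_{m,n} ν = ∞ the left-hand side is 0 and the sign is 1. -/
open scoped Classical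

/-- `f : ℕ → ℕ` represents a partition via its parts `f 1 ≥ f 2 ≥ ⋯`
(indices start at `1`; we normalize the unused value at `0` by `f 0 = f 1`). -/
def IsPartition (f : ℕ → ℕ) : Prop :=
  f 0 = f 1 ∧ (∀ i j, i ≤ j → f j ≤ f i) ∧ ∃ N, ∀ i, N ≤ i → f i = 0

/-- the partition `f` has length (number of positive parts) at most `r`,
i.e. `l(f) ≤ r`. -/
def LenLE (f : ℕ → ℕ) (r : ℕ) : Prop := ∀ i, r < i → f i = 0

/-- two partitions have the same parts. -/
def EqParts (f g : ℕ → ℕ) : Prop := ∀ i, 1 ≤ i → f i = g i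

/-- normalize the value at the (unused) index `0`. -/
def pad (f : ℕ → ℕ) : ℕ → ℕ := fun i => if i = 0 then f 1 else f i

/-- the multiset `{f i + N - i : i = 1, …, N}`. -/
def hooks (N : ℕ) (f : ℕ → ℕ) : Multiset ℕ :=
  (Multiset.range N).map (fun i => f (i + 1) + N - (i + 1))

/-- `lam` is the `(m,n)`-overlap of `mu` and `nu`, i.e. `mu ⋆_{m,n} nu = lam`:
`lam` is a partition of length at most `m + n` such that the sequence
`(lam i + (m+n) - i)_{i=1..m+n}` is a rearrangement of the concatenation of
`(mu i + m - i)_{i=1..m}` and `(nu j + n - j)_{j=1..n}`. -/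
def IsOverlap (m n : ℕ) (mu nu lam : ℕ → ℕ) : Prop :=
  LenLE lam (m + n) ∧ hooks (m + n) lam = hooks m mu + hooks n nu

/-- `mu ⋆_{m,n} nu = ∞`: the two hook sequences share a common value. -/
def OverlapInfinite (m n : ℕ) (mu nu : ℕ → ℕ) : Prop :=
  ∃ a, a ∈ hooks m mu ∧ a ∈ hooks n nu

/-- the sign `ε_{m,n}(mu, nu)` of the permutation sorting the concatenation of
`(mu i + m - i)_{i=1..m}` and `(nu j + n - j)_{j=1..n}` into strictly decreasing
order, computed as `(-1)` to the number of inversions. -/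
def overlapSign (m n : ℕ) (mu nu : ℕ → ℕ) : ℤ :=
  (-1) ^ (((Finset.range m ×ˢ Finset.range n).filter (fun p =>
    mu (p.1 + 1) + m - (p.1 + 1) < nu (p.2 + 1) + n - (p.2 + 1))).card)

/-- the truncation `(f_1, …, f_r)` of a partition. -/
def truncateP (f : ℕ → ℕ) (r : ℕ) : ℕ → ℕ := pad fun i => if i ≤ r then f i else 0

/-- `μ + ⟨k^l⟩ = (μ_1 + k, …, μ_l + k)`. -/
def addRect (mu : ℕ → ℕ) (k l : ℕ) : ℕ → ℕ := pad fun i => if i ≤ l then mu i + k else 0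

/-- `μ − ⟨k^l⟩ = (μ_1 − k, …, μ_l − k)`. -/
def subRect (mu : ℕ → ℕ) (k l : ℕ) : ℕ → ℕ := pad fun i => if i ≤ l then mu i - k else 0

/-- `ν ∪ a`: `ν` regarded as a sequence of length `r`, with the sequence `a`
appended after position `r`. -/
def concatSeq (nu : ℕ → ℕ) (r : ℕ) (tail : ℕ → ℕ) : ℕ → ℕ :=
  pad fun i => if i ≤ r then nu i else tail (i - r)

/-- the rectangular partition `⟨a^b⟩` (with `b` parts equal to `a`). -/
def rectP (a b : ℕ) : ℕ → ℕ := pad fun i => if i ≤ b then a else 0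

/-- the `(m,n)`-complement `λ̃ = (m − λ_n, …, m − λ_1)` of a partition `λ ⊂ ⟨m^n⟩`. -/
def complSeq (m n : ℕ) (lam : ℕ → ℕ) : ℕ → ℕ :=
  pad fun i => if i ≤ n then m - lam (n + 1 - i) else 0

noncomputable section

/-- the `i`-th part `λ'_i = #{j ≥ 1 : λ_j ≥ i}` of the conjugate partition. -/
def conjPart (f : ℕ → ℕ) (i : ℕ) : ℕ := {j : ℕ | 1 ≤ j ∧ i ≤ f j}.ncard

/-- the conjugate partition `λ'`. -/
def conjP (f : ℕ → ℕ) : ℕ → ℕ := pad fun i => conjPart f i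

/-- the set of integers `k ≤ min{m,n}` with `λ_{n+1−k} ≤ m − k`. -/
def indexSet (m n : ℕ) (lam : ℕ → ℕ) : Set ℤ :=
  {k : ℤ | k ≤ min (m : ℤ) (n : ℤ) ∧ (lam ((n : ℤ) + 1 - k).toNat : ℤ) ≤ (m : ℤ) - k}

/-- `k` is the `(m,n)`-index of `lam`: the largest integer `k ≤ min{m,n}`
with `λ_{n+1−k} ≤ m − k`. -/
def IsIndex (m n : ℕ) (lam : ℕ → ℕ) (k : ℤ) : Prop := IsGreatest (indexSet m n lam) k

/-- the `(m,n)`-index of `lam`. -/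
def indexOf (m n : ℕ) (lam : ℕ → ℕ) : ℤ := sSup (indexSet m n lam)

variable {F : Type*} [Field F]

/-- `Δ(X) = ∏_{i<j} (X_i − X_j)`. -/
def vanDet {n : ℕ} (X : Fin n → F) : F :=
  ∏ i : Fin n, ∏ j : Fin n, if i < j then X i - X j else 1

/-- `Δ(X; Y) = ∏_{x ∈ X, y ∈ Y} (x − y)`. -/
def vanPair {n m : ℕ} (X : Fin n → F) (Y : Fin m → F) : F :=
  ∏ i, ∏ j, (X i - Y j)

/-- the Schur function `s_λ(X)`. -/
def schur {n : ℕ} (lam : ℕ → ℕ) (X : Fin n → F) : F :=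
  if LenLE lam n then
    (Matrix.of fun i j : Fin n =>
      X i ^ (lam ((j : ℕ) + 1) + n - ((j : ℕ) + 1))).det / vanDet X
  else 0

/-- the subsequence of `X` indexed by `I` (in increasing order of indices). -/
def subSeq {n : ℕ} (X : Fin n → F) (I : Finset (Fin n)) : Fin I.card → F :=
  fun j => X (I.orderIsoOfFin rfl j).1

/-- the sign `ε(λ) = (−1)^{λ_1+⋯+λ_{n−k}} (−1)^{mk} (−1)^{k(k−1)/2}` from the
determinantal formula. -/
def LSsign (m n k : ℕ) (lam : ℕ → ℕ) : ℤ :=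
  (-1) ^ (∑ i ∈ Finset.range (n - k), lam (i + 1)) * (-1) ^ (m * k) *
    (-1) ^ (k * (k - 1) / 2)

/-- the Moens–Van der Jeugt block matrix. -/
def LSmat (k : ℕ) {n m : ℕ} (lam : ℕ → ℕ) (X : Fin n → F) (Y : Fin m → F) :
    Matrix (Fin (n + (m - k))) (Fin (n + (m - k))) F :=
  Matrix.of fun r c =>
    if hr : (r : ℕ) < n then
      if hc : (c : ℕ) < m then (X ⟨(r : ℕ), hr⟩ - Y ⟨(c : ℕ), hc⟩)⁻¹
      else X ⟨(r : ℕ), hr⟩ ^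
        ((lam ((c : ℕ) - m + 1) : ℤ) + (n : ℤ) - (m : ℤ) - (((c : ℕ) - m + 1 : ℕ) : ℤ))
    else
      if hc : (c : ℕ) < m then
        Y ⟨(c : ℕ), hc⟩ ^
          ((conjPart lam ((r : ℕ) - n + 1) : ℤ) + (m : ℤ) - (n : ℤ) - (((r : ℕ) - n + 1 : ℕ) : ℤ))
      else 0

/-- the Littlewood–Schur function `LS_λ(−X; Y)`, defined by the determinantal
formula of Moens and Van der Jeugt: it is `0` if the `(m,n)`-index `k` of `λ` is
negative, and otherwise equals `ε(λ) · Δ(Y;X)/(Δ(X)Δ(Y)) · det M`. -/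
def LS {n m : ℕ} (lam : ℕ → ℕ) (X : Fin n → F) (Y : Fin m → F) : F :=
  if indexOf m n lam < 0 then 0
  else (LSsign m n (indexOf m n lam).toNat lam : F) * vanPair Y X /
    (vanDet X * vanDet Y) * (LSmat (indexOf m n lam).toNat lam X Y).det

/-- `walkMu lam n I` is the partition with `i`-th part `λ_{V_i} + n + i − V_i`,
where `V_1 < ⋯ < V_card(I)` is the increasing (1-based) enumeration of `I`. -/
def walkMu (lam : ℕ → ℕ) (n : ℕ) {N : ℕ} (I : Finset (Fin N)) : ℕ → ℕ :=
  pad fun i =>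
    if h : 1 ≤ i ∧ i ≤ I.card then
      lam (((I.orderIsoOfFin rfl ⟨i - 1, by omega⟩).1 : ℕ) + 1) +
        (n + i - (((I.orderIsoOfFin rfl ⟨i - 1, by omega⟩).1 : ℕ) + 1))
    else 0

/-- `C_N(K)`: the set `{N − j + 1 : j ∈ {1,…,N} ∖ K}`. -/
def Cfin (N : ℕ) (K : Finset ℕ) : Finset ℕ :=
  (Finset.Icc 1 N \ K).image (fun j => N + 1 - j)

/-- the subpartition `sub_N(λ, s)`: its `j`-th part is
`λ_{s_j} + (N − s_j) − (r − j)`, where `s_1 < ⋯ < s_r` are the elements of `s`. -/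
def subPartF (N : ℕ) (lam : ℕ → ℕ) (s : Finset ℕ) : ℕ → ℕ :=
  pad fun j =>
    if h : 1 ≤ j ∧ j ≤ s.card then
      lam ((s.orderIsoOfFin rfl ⟨j - 1, by omega⟩).1) +
        (N - (s.orderIsoOfFin rfl ⟨j - 1, by omega⟩).1) - (s.card - j)
    else 0

end

/-- `α` is a quasi-partition associated to the subset with membership
predicate `inV` (the complement being taken inside `{1, …, m+n}`). -/
def IsQuasiPartition (m n : ℕ) (inV : ℕ → Prop) (α : ℕ → ℤ) : Prop :=
  0 ≤ α (m + n) ∧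
  (∀ i, 1 < i → i < m + n → ¬(α (i - 1) < α i ∧ α i < α (i + 1))) ∧
  (∀ i, 1 ≤ i → i < m + n → ((inV i ↔ inV (i + 1)) → α (i + 1) ≤ α i)) ∧
  (∀ i, 1 ≤ i → i < m + n → (¬(inV i ↔ inV (i + 1)) → α (i + 1) ≤ α i + 1))

/-- the integer sequence `α_1, …, α_N` is a partition: non-increasing and
non-negative. -/
def IsPartitionSeqZ (N : ℕ) (α : ℕ → ℤ) : Prop :=
  (∀ i j, 1 ≤ i → i ≤ j → j ≤ N → α j ≤ α i) ∧ ∀ i, 1 ≤ i → i ≤ N → 0 ≤ α i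

/-!
Let `e` be the concatenation of the hook sequences `(μ_i + m - i)_i` and `(ν_j + n - j)_j`.
Laplace expansion of `det (X_i ^ e_j)` along its first `m` columns, divided by `Δ(X)`, is exactly
`Σ_I s_μ(X_I) s_ν(X_{Iᶜ}) / Δ(X_I; X_{Iᶜ})`: listing `X_I` before `X_{Iᶜ}` gives
`Δ(X_I) Δ(X_{Iᶜ}) Δ(X_I; X_{Iᶜ})`, which is `Δ(X)` times the sign of the shuffle that also
appears in the Laplace term. If two entries of `e` coincide the determinant has two equal columns
and vanishes. Otherwise `e` rearranges the hook sequence of `μ ⋆ ν`, and sorting the columns costs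
the sign `ε_{m,n}(μ, ν)`.
-/

open Finset Matrix Equiv

section Vandermonde

variable {F : Type*} [Field F]

lemma vanDet_eq_neg_one_pow_mul_det_vandermonde {N : ℕ} (Z : Fin N → F) :
    vanDet Z = (-1) ^ (∑ i : Fin N, #(Ioi i)) * (vandermonde Z).det := by
  rw [det_vandermonde, ← prod_pow_eq_pow_sum, ← prod_mul_distrib]
  refine prod_congr rfl fun i _ => ?_
  rw [← prod_filter, filter_lt_eq_Ioi, ← prod_const, ← prod_mul_distrib]
  exact prod_congr rfl fun j _ => by ring

lemma vanDet_comp_perm {N : ℕ} (Z : Fin N → F) (σ : Perm (Fin N)) :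
    vanDet (Z ∘ σ) = (Perm.sign σ : F) * vanDet Z := by
  have : vandermonde (Z ∘ σ) = (vandermonde Z).submatrix σ id := rfl
  rw [vanDet_eq_neg_one_pow_mul_det_vandermonde, vanDet_eq_neg_one_pow_mul_det_vandermonde, this,
    det_permute]
  ring

lemma vanDet_append {m n : ℕ} (S : Fin m → F) (T : Fin n → F) :
    vanDet (Fin.append S T) = vanDet S * vanDet T * vanPair S T := by
  have hcc : ∀ i j : Fin m, Fin.castAdd n i < Fin.castAdd n j ↔ i < j := fun _ _ => Iff.rfl
  have hlt : ∀ (i : Fin m) (j : Fin n), Fin.castAdd n i < Fin.natAdd m j := fun i j => by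
    rw [Fin.lt_def, Fin.val_castAdd, Fin.val_natAdd]
    omega
  simp only [vanDet, vanPair, Fin.prod_univ_add, Fin.append_left, Fin.append_right, hcc,
    Fin.natAdd_lt_natAdd_iff, hlt, if_true, (hlt _ _).not_gt, if_false, prod_const_one,
    mul_one, prod_mul_distrib]
  ring

lemma vanDet_pos {K : Type*} [Field K] [LinearOrder K] [IsStrictOrderedRing K] {N : ℕ}
    {Z : Fin N → K} (hZ : StrictAnti Z) : 0 < vanDet Z :=
  prod_pos fun i _ => prod_pos fun j _ => by
    split_ifs with h
    · exact sub_pos.2 (hZ h)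
    · exact one_pos

lemma vanPair_eq_neg_one_pow_mul_abs {K : Type*} [Field K] [LinearOrder K]
    [IsStrictOrderedRing K] {m n : ℕ} (A : Fin m → K) (B : Fin n → K) :
    vanPair A B = (-1) ^ #{q : Fin m × Fin n | A q.1 < B q.2} * |vanPair A B| := by
  have hfactor : ∀ a b : K, a - b = (if a < b then -1 else 1) * |a - b| := fun a b => by
    split_ifs with h
    · rw [abs_of_neg (sub_neg.2 h)]; ring
    · rw [abs_of_nonneg (sub_nonneg.2 (not_lt.1 h)), one_mul]
  calc vanPair A B
        = ∏ q : Fin m × Fin n, (if A q.1 < B q.2 then -1 else 1) * |A q.1 - B q.2| := by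
        simp_rw [← hfactor, Fintype.prod_prod_type, vanPair]
    _ = (-1) ^ #{q : Fin m × Fin n | A q.1 < B q.2} * |vanPair A B| := by
        rw [prod_mul_distrib, ← prod_filter, prod_const, vanPair, abs_prod, Fintype.prod_prod_type]
        simp_rw [abs_prod]

end Vandermonde

lemma Fin.comp_append {α β : Type*} {m n : ℕ} (f : α → β) (a : Fin m → α) (b : Fin n → α) :
    f ∘ Fin.append a b = Fin.append (f ∘ a) (f ∘ b) := by
  funext i
  refine Fin.addCases (fun i => ?_) (fun j => ?_) i <;> simp

lemma exists_perm_comp_eq_of_map_univ_eq {α : Type*} {N : ℕ} {f g : Fin N → α}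
    (hf : Function.Injective f) (h : univ.val.map f = univ.val.map g) :
    ∃ p : Perm (Fin N), f ∘ p = g := by
  have hg : Function.Injective g := by
    have hnd : (univ.val.map g).Nodup := h ▸ univ.nodup.map hf
    exact fun a b hab => Multiset.inj_on_of_nodup_map hnd a (mem_univ a) b (mem_univ b) hab
  have hrange : ∀ j, ∃ z, f z = g j := fun j => by
    obtain ⟨z, -, hz⟩ := Multiset.mem_map.1 (h ▸ Multiset.mem_map_of_mem g (mem_univ j))
    exact ⟨z, hz⟩
  choose φ hφ using hrange
  have hφ_inj : Function.Injective φ := fun a b hab => hg (by rw [← hφ a, ← hφ b, hab])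
  exact ⟨Equiv.ofBijective φ (Finite.injective_iff_bijective.1 hφ_inj), funext hφ⟩

/-- Compare Vandermonde products over `ℚ`: those of strictly decreasing sequences are positive,
so the sign of `p` is the sign of `vanPair a b`. -/
lemma sign_eq_neg_one_pow_of_comp_eq_append {m n : ℕ} {a : Fin m → ℕ} {b : Fin n → ℕ}
    {c : Fin (m + n) → ℕ} (ha : StrictAnti a) (hb : StrictAnti b) (hc : StrictAnti c)
    {p : Perm (Fin (m + n))} (hp : c ∘ p = Fin.append a b) :
    (Perm.sign p : ℤ) = (-1) ^ #{q : Fin m × Fin n | a q.1 < b q.2} := by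
  set A : Fin m → ℚ := (↑) ∘ a
  set B : Fin n → ℚ := (↑) ∘ b
  set C : Fin (m + n) → ℚ := (↑) ∘ c
  have hvan : (Perm.sign p : ℚ) * vanDet C = vanDet A * vanDet B * vanPair A B := by
    rw [← vanDet_comp_perm, ← vanDet_append, Function.comp_assoc, hp, Fin.comp_append]
  have hpair := vanPair_eq_neg_one_pow_mul_abs A B
  simp only [A, B, Function.comp_apply, Nat.cast_lt] at hpair
  have hA := vanDet_pos (Nat.strictMono_cast.comp_strictAnti ha : StrictAnti A)
  have hB := vanDet_pos (Nat.strictMono_cast.comp_strictAnti hb : StrictAnti B)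
  have hC := vanDet_pos (Nat.strictMono_cast.comp_strictAnti hc : StrictAnti C)
  have habs := abs_nonneg (vanPair A B)
  rw [hpair] at hvan
  suffices ((Perm.sign p : ℤ) : ℚ) = (-1) ^ #{q : Fin m × Fin n | a q.1 < b q.2} by
    exact_mod_cast this
  rcases Int.units_eq_one_or (Perm.sign p) with hs | hs <;>
    rcases neg_one_pow_eq_or ℚ #{q : Fin m × Fin n | a q.1 < b q.2} with hk | hk <;>
    simp only [hs, hk, Units.val_one, Units.val_neg, Int.cast_one, Int.cast_neg] at hvan ⊢ <;>
    first | rfl | nlinarith [mul_pos hA hB]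

section Laplace

variable {m n : ℕ}

lemma card_compl_eq_of_card_eq {I : Finset (Fin (m + n))} (hI : #I = m) : #Iᶜ = n := by
  rw [card_compl, Fintype.card_fin, hI, Nat.add_sub_cancel_left]

noncomputable def shufflePerm (I : {I : Finset (Fin (m + n)) // #I = m}) : Perm (Fin (m + n)) :=
  Equiv.ofBijective
    (Fin.append (I.1.orderEmbOfFin I.2) (I.1ᶜ.orderEmbOfFin (card_compl_eq_of_card_eq I.2)))
    (Finite.injective_iff_bijective.1 <| Fin.append_injective_iff.2
      ⟨(orderEmbOfFin _ _).injective, (orderEmbOfFin _ _).injective, fun i j h =>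
        mem_compl.1 (h ▸ orderEmbOfFin_mem _ _ j) (orderEmbOfFin_mem _ _ i)⟩)

lemma shufflePerm_castAdd (I : {I : Finset (Fin (m + n)) // #I = m}) (i : Fin m) :
    shufflePerm I (Fin.castAdd n i) = I.1.orderEmbOfFin I.2 i :=
  Fin.append_left _ _ i

lemma shufflePerm_natAdd (I : {I : Finset (Fin (m + n)) // #I = m}) (j : Fin n) :
    shufflePerm I (Fin.natAdd m j) = I.1ᶜ.orderEmbOfFin (card_compl_eq_of_card_eq I.2) j :=
  Fin.append_right _ _ j

def blockPerm (τ : Perm (Fin m) × Perm (Fin n)) : Perm (Fin (m + n)) :=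
  finSumFinEquiv.permCongr (τ.1.sumCongr τ.2)

lemma blockPerm_castAdd (τ : Perm (Fin m) × Perm (Fin n)) (i : Fin m) :
    blockPerm τ (Fin.castAdd n i) = Fin.castAdd n (τ.1 i) := by
  simp [blockPerm, permCongr_apply]

lemma blockPerm_natAdd (τ : Perm (Fin m) × Perm (Fin n)) (j : Fin n) :
    blockPerm τ (Fin.natAdd m j) = Fin.natAdd m (τ.2 j) := by
  simp [blockPerm, permCongr_apply]

lemma sign_blockPerm (τ : Perm (Fin m) × Perm (Fin n)) :
    Perm.sign (blockPerm τ) = Perm.sign τ.1 * Perm.sign τ.2 := by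
  rw [blockPerm, Perm.sign_permCongr, Perm.sign_sumCongr]

lemma blockPerm_injective : Function.Injective (blockPerm (m := m) (n := n)) :=
  (permCongr _).injective.comp Perm.sumCongrHom_injective

lemma bijective_shufflePerm_mul_blockPerm :
    Function.Bijective fun x : {I : Finset (Fin (m + n)) // #I = m} ×
        (Perm (Fin m) × Perm (Fin n)) => shufflePerm x.1 * blockPerm x.2 := by
  refine (Fintype.bijective_iff_injective_and_card _).2 ⟨fun x y hxy => ?_, ?_⟩
  · have himage : ∀ x : {I : Finset (Fin (m + n)) // #I = m} × (Perm (Fin m) × Perm (Fin n)),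
        univ.image (fun i => (shufflePerm x.1 * blockPerm x.2) (Fin.castAdd n i)) = x.1.1 := by
      intro x
      calc _ = (univ.image x.2.1).image (x.1.1.orderEmbOfFin x.1.2) := by
            simp only [Perm.mul_apply, blockPerm_castAdd, shufflePerm_castAdd, image_image]
            rfl
        _ = x.1.1 := by rw [image_univ_equiv, image_orderEmbOfFin_univ]
    dsimp only at hxy
    have hI : x.1 = y.1 := Subtype.ext (by rw [← himage x, ← himage y, hxy])
    rw [hI, mul_right_inj] at hxy
    exact Prod.ext hI (blockPerm_injective hxy)
  · rw [Fintype.card_prod, Fintype.card_prod, Fintype.card_finset_len, Fintype.card_perm,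
      Fintype.card_perm, Fintype.card_perm, Fintype.card_fin, Fintype.card_fin, Fintype.card_fin,
      ← mul_assoc, ← Nat.choose_mul_factorial_mul_factorial (Nat.le_add_right m n),
      Nat.add_sub_cancel_left]

theorem det_eq_sum_shufflePerm {R : Type*} [CommRing R]
    (M : Matrix (Fin (m + n)) (Fin (m + n)) R) :
    M.det = ∑ I : {I : Finset (Fin (m + n)) // #I = m}, (Perm.sign (shufflePerm I) : R) *
      (M.submatrix (I.1.orderEmbOfFin I.2) (Fin.castAdd n)).det *
      (M.submatrix (I.1ᶜ.orderEmbOfFin (card_compl_eq_of_card_eq I.2)) (Fin.natAdd m)).det := by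
  rw [det_apply, ← Fintype.sum_bijective _ bijective_shufflePerm_mul_blockPerm _ _ fun _ => rfl,
    Fintype.sum_prod_type]
  refine sum_congr rfl fun I _ => ?_
  rw [det_apply, det_apply, mul_assoc, sum_mul_sum, mul_sum, Fintype.sum_prod_type]
  refine sum_congr rfl fun τ₁ _ => ?_
  rw [mul_sum]
  refine sum_congr rfl fun τ₂ _ => ?_
  simp only [Perm.sign_mul, sign_blockPerm, Fin.prod_univ_add, Perm.mul_apply, blockPerm_castAdd,
    blockPerm_natAdd, shufflePerm_castAdd, shufflePerm_natAdd, submatrix_apply, Units.smul_def,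
    zsmul_eq_mul]
  push_cast
  ring

end Laplace

section Schur

variable {F : Type*} [Field F] {m n : ℕ}

def hookSeq (N : ℕ) (f : ℕ → ℕ) : Fin N → ℕ := fun i => f (i + 1) + N - (i + 1)

lemma hookSeq_strictAnti {N : ℕ} {f : ℕ → ℕ} (hf : Antitone f) : StrictAnti (hookSeq N f) := by
  intro i j hij
  have hij' : (i : ℕ) < j := hij
  have hf' : f (j + 1) ≤ f (i + 1) := hf (by omega)
  have hj := j.2
  simp only [hookSeq]
  omega

lemma hooks_eq_map_hookSeq (N : ℕ) (f : ℕ → ℕ) : hooks N f = univ.val.map (hookSeq N f) := by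
  rw [Fin.univ_val_map, List.ofFn_eq_map,
    show hookSeq N f = (fun i => f (i + 1) + N - (i + 1)) ∘ Fin.val from rfl, ← List.map_map,
    List.map_coe_finRange_eq_range]
  rfl

lemma map_univ_val_append {α : Type*} (a : Fin m → α) (b : Fin n → α) :
    univ.val.map (Fin.append a b) = univ.val.map a + univ.val.map b := by
  simp [Fin.univ_val_map, List.ofFn_fin_append]

lemma schur_of_lenLE {N : ℕ} {lam : ℕ → ℕ} (h : LenLE lam N) (S : Fin N → F) :
    schur lam S = (of fun i j => S i ^ hookSeq N lam j).det / vanDet S :=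
  if_pos h

lemma schur_subSeq {N k : ℕ} (lam : ℕ → ℕ) (X : Fin N → F) {I : Finset (Fin N)} (hI : #I = k) :
    schur lam (subSeq X I) = schur lam (X ∘ I.orderEmbOfFin hI) := by
  subst hI
  rfl

lemma vanPair_subSeq {N k l : ℕ} (X : Fin N → F) {I J : Finset (Fin N)} (hI : #I = k)
    (hJ : #J = l) :
    vanPair (subSeq X I) (subSeq X J) =
      vanPair (X ∘ I.orderEmbOfFin hI) (X ∘ J.orderEmbOfFin hJ) := by
  subst hI hJ
  rfl

lemma sign_cast_mul_self {α : Type*} [DecidableEq α] [Fintype α] (σ : Perm α) :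
    (Perm.sign σ : F) * Perm.sign σ = 1 := by
  rw [← Int.cast_mul, ← Units.val_mul, Int.units_mul_self, Units.val_one, Int.cast_one]

theorem sum_schur_mul_schur_div_vanPair (X : Fin (m + n) → F) {mu nu : ℕ → ℕ}
    (hmu : LenLE mu m) (hnu : LenLE nu n) :
    ∑ I ∈ powersetCard m univ,
        schur mu (subSeq X I) * schur nu (subSeq X Iᶜ) / vanPair (subSeq X I) (subSeq X Iᶜ) =
      (of fun i j => X i ^ Fin.append (hookSeq m mu) (hookSeq n nu) j).det / vanDet X := by
  rw [det_eq_sum_shufflePerm, sum_div, sum_subtype _ fun I => mem_powersetCard_univ]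
  refine sum_congr rfl fun I _ => ?_
  have hIc := card_compl_eq_of_card_eq I.2
  set S := X ∘ I.1.orderEmbOfFin I.2
  set T := X ∘ I.1ᶜ.orderEmbOfFin hIc
  have hden : vanDet S * vanDet T * vanPair S T = Perm.sign (shufflePerm I) * vanDet X := by
    rw [← vanDet_append, ← Fin.comp_append, ← vanDet_comp_perm]
    rfl
  have hA : (of fun i j => X i ^ Fin.append (hookSeq m mu) (hookSeq n nu) j).submatrix
      (I.1.orderEmbOfFin I.2) (Fin.castAdd n) = of fun i j => S i ^ hookSeq m mu j := by
    ext i j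
    simp [S]
  have hB : (of fun i j => X i ^ Fin.append (hookSeq m mu) (hookSeq n nu) j).submatrix
      (I.1ᶜ.orderEmbOfFin hIc) (Fin.natAdd m) = of fun i j => T i ^ hookSeq n nu j := by
    ext i j
    simp [T]
  rw [schur_subSeq mu X I.2, schur_subSeq nu X hIc, vanPair_subSeq X I.2 hIc, schur_of_lenLE hmu,
    schur_of_lenLE hnu, div_mul_div_comm, div_div, hden, hA, hB, div_eq_mul_inv, div_eq_mul_inv,
    mul_inv, inv_eq_of_mul_eq_one_right (sign_cast_mul_self _)]
  ring

end Schur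

lemma overlapSign_eq_neg_one_pow_card (m n : ℕ) (mu nu : ℕ → ℕ) :
    overlapSign m n mu nu =
      (-1) ^ #{q : Fin m × Fin n | hookSeq m mu q.1 < hookSeq n nu q.2} := by
  rw [overlapSign]
  congr 1
  symm
  refine card_bij (fun q _ => ((q.1 : ℕ), (q.2 : ℕ))) (fun q hq => ?_) (fun q _ q' _ h => ?_) ?_
  · simp only [mem_filter, mem_univ, true_and] at hq
    simpa [hookSeq] using hq
  · simpa [Prod.ext_iff, Fin.ext_iff] using h
  · rintro ⟨a, b⟩ h
    simp only [mem_filter, mem_product, mem_range] at h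
    exact ⟨(⟨a, h.1.1⟩, ⟨b, h.1.2⟩), mem_filter.2 ⟨mem_univ _, h.2⟩, rfl⟩

theorem first_overlap_identity_schur_general
    {F : Type*} [Field F] {m n : ℕ} (X : Fin (m + n) → F)
    (mu nu : ℕ → ℕ) (hmu : IsPartition mu) (hnu : IsPartition nu)
    (hmul : LenLE mu m) (hnul : LenLE nu n) :
    (∀ w : ℕ → ℕ, IsPartition w → IsOverlap m n mu nu w →
      schur w X =
        ∑ I ∈ Finset.powersetCard m (Finset.univ : Finset (Fin (m + n))),
          (overlapSign m n mu nu : F) * schur mu (subSeq X I) * schur nu (subSeq X Iᶜ) /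
            vanPair (subSeq X I) (subSeq X Iᶜ)) ∧
    (OverlapInfinite m n mu nu →
      0 = ∑ I ∈ Finset.powersetCard m (Finset.univ : Finset (Fin (m + n))),
            schur mu (subSeq X I) * schur nu (subSeq X Iᶜ) /
              vanPair (subSeq X I) (subSeq X Iᶜ)) := by
  refine ⟨fun w hw ⟨hwl, hhooks⟩ => ?_, fun ⟨x, hxm, hxn⟩ => ?_⟩
  · rw [hooks_eq_map_hookSeq, hooks_eq_map_hookSeq, hooks_eq_map_hookSeq,
      ← map_univ_val_append] at hhooks
    obtain ⟨p, hp⟩ :=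
      exists_perm_comp_eq_of_map_univ_eq (hookSeq_strictAnti hw.2.1).injective hhooks
    have hsign := sign_eq_neg_one_pow_of_comp_eq_append (hookSeq_strictAnti hmu.2.1)
      (hookSeq_strictAnti hnu.2.1) (hookSeq_strictAnti hw.2.1) hp
    rw [← overlapSign_eq_neg_one_pow_card] at hsign
    simp_rw [mul_assoc (overlapSign m n mu nu : F), mul_div_assoc (overlapSign m n mu nu : F)]
    rw [← mul_sum, sum_schur_mul_schur_div_vanPair X hmul hnul, ← hp, schur_of_lenLE hwl]
    have hdet : (of fun i j : Fin (m + n) => X i ^ (hookSeq (m + n) w ∘ p) j).det =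
        overlapSign m n mu nu * (of fun i j : Fin (m + n) => X i ^ hookSeq (m + n) w j).det := by
      rw [← hsign]
      exact det_permute' p (of fun i j : Fin (m + n) => X i ^ hookSeq (m + n) w j)
    rw [hdet, mul_div_assoc, ← mul_assoc, ← hsign, sign_cast_mul_self, one_mul]
  · rw [hooks_eq_map_hookSeq, Multiset.mem_map] at hxm hxn
    obtain ⟨i, -, hi⟩ := hxm
    obtain ⟨j, -, hj⟩ := hxn
    have hij : Fin.castAdd n i ≠ Fin.natAdd m j := by
      rw [Ne, Fin.ext_iff, Fin.val_castAdd, Fin.val_natAdd]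
      omega
    rw [sum_schur_mul_schur_div_vanPair X hmul hnul,
      det_zero_of_column_eq hij fun k => by simp [hi, hj], zero_div]

/-- **First overlap identity for Schur functions** (Dehaye): when the overlap
exists it indexes the left-hand side; when it is `∞` the left-hand side is `0`
and the sign is `1`. -/
theorem first_overlap_identity_schur
    {F : Type*} [Field F] {m n : ℕ} (X : Fin (m + n) → F)
    (hXinj : Function.Injective X)
    (mu nu : ℕ → ℕ) (hmu : IsPartition mu) (hnu : IsPartition nu)
    (hmul : LenLE mu m) (hnul : LenLE nu n) :
    (∀ w : ℕ → ℕ, IsPartition w → IsOverlap m n mu nu w →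
      schur w X =
        ∑ I ∈ Finset.powersetCard m (Finset.univ : Finset (Fin (m + n))),
          (overlapSign m n mu nu : F) * schur mu (subSeq X I) * schur nu (subSeq X Iᶜ) /
            vanPair (subSeq X I) (subSeq X Iᶜ)) ∧
    (OverlapInfinite m n mu nu →
      0 = ∑ I ∈ Finset.powersetCard m (Finset.univ : Finset (Fin (m + n))),
            schur mu (subSeq X I) * schur nu (subSeq X Iᶜ) /
              vanPair (subSeq X I) (subSeq X Iᶜ)) :=
  first_overlap_identity_schur_general X mu nu hmu hnu hmul hnul
end

section
/- Let F be a field, X a sequence of n elements and Y a sequence of m elements of F such that all m+n elements together are pairwise distinct. Then for every integer l ≥ 0, LS_{⟨(m+l)^n⟩}(−X; Y) = (−1)^{l·n} · e(X)^l · Δ(Y; X), where ⟨(m+l)^n⟩ is the partition with n parts all equal to m+l (its (m,n)-index is 0). -/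
open scoped Classical

/-! For `λ = ⟨(m+l)^n⟩` the `(m,n)`-index is `0` and every part of `λ'` up to `m` equals `n`,
so the Moens–Van der Jeugt matrix is block anti-triangular, `[[Cauchy, B], [C, 0]]`.
Here `B = (x_i^{l+n-j})` is `e(X)^l` times a Vandermonde matrix and `C = (y^{m-i})` is a
transposed Vandermonde matrix, so `det M = ± e(X)^l Δ(X) Δ(Y)`, which cancels the
denominator of the determinantal formula. -/

open Finset Matrix

section Rectangle

variable {a b : ℕ}

lemma rectP_apply_of_le {i : ℕ} (h1 : 1 ≤ i) (h2 : i ≤ b) : rectP a b i = a := by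
  simp only [rectP, pad]
  rw [if_neg (by omega), if_pos h2]

lemma rectP_apply_of_lt {i : ℕ} (h : b < i) : rectP a b i = 0 := by
  simp only [rectP, pad]
  rw [if_neg (by omega), if_neg (by omega)]

lemma conjPart_rectP {i : ℕ} (h1 : 1 ≤ i) (h2 : i ≤ a) : conjPart (rectP a b) i = b := by
  have hset : {j : ℕ | 1 ≤ j ∧ i ≤ rectP a b j} = Set.Icc 1 b := by
    ext j
    simp only [Set.mem_ofPred_eq, Set.mem_Icc]
    refine ⟨fun ⟨hj1, hj2⟩ => ⟨hj1, ?_⟩, fun ⟨hj1, hj2⟩ => ⟨hj1, ?_⟩⟩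
    · by_contra hb
      rw [rectP_apply_of_lt (by omega)] at hj2
      omega
    · rwa [rectP_apply_of_le hj1 hj2]
  rw [conjPart, hset, ← Finset.coe_Icc, Set.ncard_coe_finset, Nat.card_Icc, Nat.add_sub_cancel]

lemma indexOf_rectP_add (m n l : ℕ) : indexOf m n (rectP (m + l) n) = 0 := by
  refine IsGreatest.csSup_eq ⟨⟨by omega, ?_⟩, fun k ⟨hk, hklam⟩ => ?_⟩
  · rw [show ((n : ℤ) + 1 - 0).toNat = n + 1 by omega, rectP_apply_of_lt (by omega)]
    simp
  · by_contra! hk0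
    rw [rectP_apply_of_le (by omega) (by omega)] at hklam
    push_cast at hklam
    omega

lemma LSsign_zero_rectP (m : ℕ) : LSsign m b 0 (rectP a b) = (-1) ^ (b * a) := by
  have hsum : ∑ i ∈ range b, rectP a b (i + 1) = b * a := by
    rw [sum_congr rfl fun i hi => rectP_apply_of_le (by omega) (by simpa using hi),
      sum_const, card_range, smul_eq_mul]
  simp [LSsign, hsum]

end Rectangle

section Vandermonde

variable {F : Type*} [Field F] {N : ℕ}

lemma vanDet_eq_prod_Ioi (v : Fin N → F) : vanDet v = ∏ i, ∏ j ∈ Ioi i, (v i - v j) := by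
  simp only [vanDet, ← filter_lt_eq_Ioi, prod_filter]

lemma det_projVandermonde_one (v : Fin N → F) : (projVandermonde 1 v).det = vanDet v := by
  simp [det_projVandermonde, vanDet_eq_prod_Ioi]

lemma vanDet_ne_zero {v : Fin N → F} (hv : Function.Injective v) : vanDet v ≠ 0 := by
  rw [vanDet_eq_prod_Ioi]
  exact prod_ne_zero_iff.2 fun i _ => prod_ne_zero_iff.2 fun j hj =>
    sub_ne_zero.2 (hv.ne (mem_Ioi.1 hj).ne)

end Vandermonde

lemma Equiv.Perm.sign_finRotate_pow (n m : ℕ) :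
    Perm.sign (finRotate (n + m) ^ m) = (-1) ^ (n * m) := by
  rcases m with _ | m
  · simp
  rw [map_pow, sign_finRotate, ← pow_mul, show n + (m + 1) - 1 = n + m by omega,
    show (n + m) * (m + 1) = n * (m + 1) + m * (m + 1) by ring, pow_add,
    (Nat.even_mul_succ_self m).neg_one_pow, mul_one]

lemma val_finRotate_pow_apply {N : ℕ} (k : ℕ) (j : Fin N) :
    (((finRotate N ^ k) j : Fin N) : ℕ) = ((j : ℕ) + k) % N := by
  rcases N with _ | N
  · exact j.elim0
  induction k with
  | zero => simp [Nat.mod_eq_of_lt j.isLt]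
  | succ k ih =>
    rw [pow_succ', Equiv.Perm.mul_apply, finRotate_apply, Fin.val_add, ih, Fin.val_one',
      ← Nat.add_mod, Nat.add_assoc]

lemma Matrix.det_of_submatrix_eq_fromBlocks_zero₂₂ {R : Type*} [CommRing R] {n m : ℕ}
    {M : Matrix (Fin (n + m)) (Fin (n + m)) R} {A : Matrix (Fin n) (Fin m) R}
    {B : Matrix (Fin n) (Fin n) R} {C : Matrix (Fin m) (Fin m) R}
    (hM : M.submatrix finSumFinEquiv (finSumFinEquiv.trans (finCongr (Nat.add_comm m n))) =
      fromBlocks A B C 0) :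
    M.det = (-1) ^ (n * m) * B.det * C.det := by
  set e : Fin n ⊕ Fin m ≃ Fin (n + m) := finSumFinEquiv
  set τ : Equiv.Perm (Fin (n + m)) :=
    (e.symm.trans (Equiv.sumComm _ _)).trans (finSumFinEquiv.trans (finCongr (Nat.add_comm m n)))
  have hτ : τ = finRotate (n + m) ^ m := by
    ext x
    rw [val_finRotate_pow_apply]
    refine Fin.addCases (fun i => ?_) (fun j => ?_) x
    · simp [τ, e, Nat.mod_eq_of_lt (show m + (i : ℕ) < n + m by omega), Nat.add_comm]
    · simp [τ, e, show (n + (j : ℕ) + m) % (n + m) = j by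
        rw [Nat.add_right_comm, Nat.add_mod_left, Nat.mod_eq_of_lt (by omega)]]
  have hblocks :
      fromBlocks B A 0 C = (M.submatrix e e).submatrix id (Equiv.permCongr e.symm τ) := by
    rw [← submatrix_id_id (fromBlocks B A 0 C), ← fromBlocks_submatrix_sum_swap_right, ← hM,
      submatrix_submatrix, submatrix_submatrix]
    congr 1
    ext j
    simp [τ, e, Equiv.permCongr_apply]
  have hdet := det_permute' (Equiv.permCongr e.symm τ) (M.submatrix e e)
  rw [← hblocks, det_fromBlocks_zero₂₁, det_submatrix_equiv_self, Equiv.Perm.sign_permCongr,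
    hτ, Equiv.Perm.sign_finRotate_pow] at hdet
  rw [mul_assoc, hdet, ← mul_assoc]
  push_cast
  rw [← mul_pow, neg_one_mul, neg_neg, one_pow, one_mul]

section LSmat

variable {F : Type*} [Field F] {m n : ℕ}

lemma LSmat_zero_rectP_submatrix (l : ℕ) (X : Fin n → F) (Y : Fin m → F) :
    (LSmat 0 (rectP (m + l) n) X Y).submatrix finSumFinEquiv
        (finSumFinEquiv.trans (finCongr (Nat.add_comm m n))) =
      fromBlocks (of fun i j => (X i - Y j)⁻¹) (of fun i j => X i ^ l * projVandermonde 1 X i j)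
        (projVandermonde 1 Y)ᵀ 0 := by
  ext (i | i) (j | j)
  · simp [LSmat]
  · have hexp : ((rectP (m + l) n (j + 1) : ℕ) : ℤ) + n - m - ((j : ℤ) + 1) =
        ((l + (n - (j + 1)) : ℕ) : ℤ) := by
      rw [rectP_apply_of_le (by omega) (by omega)]
      omega
    rw [submatrix_apply, fromBlocks_apply₁₂, of_apply, projVandermonde_apply, Pi.one_apply,
      one_pow, one_mul, Fin.val_rev, ← pow_add, ← zpow_natCast, ← hexp]
    simp [LSmat]
  · have hexp : ((conjPart (rectP (m + l) n) (i + 1) : ℕ) : ℤ) + m - n - ((i : ℤ) + 1) =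
        ((m - (i + 1) : ℕ) : ℤ) := by
      rw [conjPart_rectP (by omega) (by omega)]
      omega
    simp [LSmat, projVandermonde_apply, hexp, -Nat.cast_sub]
  · simp [LSmat]

lemma det_LSmat_zero_rectP (l : ℕ) (X : Fin n → F) (Y : Fin m → F) :
    (LSmat 0 (rectP (m + l) n) X Y).det =
      (-1) ^ (n * m) * ((∏ i, X i) ^ l * vanDet X) * vanDet Y := by
  -- `(m := m)`: the rows of `LSmat 0` are indexed by `Fin (n + (m - 0))`
  rw [det_of_submatrix_eq_fromBlocks_zero₂₂ (m := m) (LSmat_zero_rectP_submatrix l X Y),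
    det_mul_column, det_transpose, det_projVandermonde_one, det_projVandermonde_one, prod_pow]

end LSmat

theorem LS_rectangle_general
    {F : Type*} [Field F] {m n : ℕ} (X : Fin n → F) (Y : Fin m → F)
    (hXinj : Function.Injective X) (hYinj : Function.Injective Y) (l : ℕ) :
    LS (rectP (m + l) n) X Y = (-1 : F) ^ (l * n) * (∏ i, X i) ^ l * vanPair Y X := by
  have hX := vanDet_ne_zero hXinj
  have hY := vanDet_ne_zero hYinj
  have hsign : (-1 : F) ^ (n * (m + l)) * (-1) ^ (n * m) = (-1) ^ (l * n) := by
    rw [← pow_add, show n * (m + l) + n * m = l * n + 2 * (n * m) by ring, pow_add, pow_mul]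
    simp
  rw [LS, indexOf_rectP_add, if_neg (lt_irrefl 0), Int.toNat_zero, LSsign_zero_rectP,
    det_LSmat_zero_rectP, ← hsign]
  push_cast
  field_simp

/-- **Littlewood's formula for a rectangular partition**:
`LS_{⟨(m+l)^n⟩}(−X; Y) = (−1)^{l·n} e(X)^l Δ(Y; X)`. -/
theorem LS_rectangle
    {F : Type*} [Field F] {m n : ℕ} (X : Fin n → F) (Y : Fin m → F)
    (hXinj : Function.Injective X) (hYinj : Function.Injective Y)
    (hXY : ∀ i j, X i ≠ Y j) (l : ℕ) :
    LS (rectP (m + l) n) X Y = (-1 : F) ^ (l * n) * (∏ i, X i) ^ l * vanPair Y X :=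
  LS_rectangle_general X Y hXinj hYinj l
end

section
/- Let m, n be non-negative integers and let μ, ν be partitions with l(μ) ≤ m and l(ν) ≤ n. Then μ ⋆_{m,n} ν = ∞ (i.e., the sequences (μ_i + m − i)_{i=1,…,m} and (ν_j + n − j)_{j=1,…,n} share a common value) if and only if there exist an m-element subset V = {V_1 < ⋯ < V_m} of {1, …, m+n}, with complement H = {H_1 < ⋯ < H_n}, and a quasi-partition α associated to V which is not a partition (i.e., α is not both non-increasing and everywhere non-negative), such that μ_i = (n + i − V_i) + α_{V_i} for all 1 ≤ i ≤ m and ν_j = (m + j − H_j) + α_{H_j} for all 1 ≤ j ≤ n. -/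
open scoped Classical

namespace OverlapAux

variable (m n : ℕ) (mu nu : ℕ → ℕ)

/-- hook values of `mu` as integers -/
def A (i : ℕ) : ℤ := (mu i : ℤ) + m - i
/-- hook values of `nu` as integers -/
def B (j : ℕ) : ℤ := (nu j : ℤ) + n - j

def posA (i : ℕ) : ℕ := i + ((Finset.Icc 1 n).filter (fun j => A m mu i < B n nu j)).card
def posB (j : ℕ) : ℕ := j + ((Finset.Icc 1 m).filter (fun i => B n nu j ≤ A m mu i)).card

def Vset : Finset ℕ := (Finset.Icc 1 m).image (posA m n mu nu)

def invA (k : ℕ) : ℕ := ((Finset.Icc 1 m).filter (fun i => posA m n mu nu i ≤ k)).card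
def invB (k : ℕ) : ℕ := ((Finset.Icc 1 n).filter (fun j => posB m n mu nu j ≤ k)).card

def alph (k : ℕ) : ℤ :=
  (if k ∈ Vset m n mu nu then A m mu (invA m n mu nu k) else B n nu (invB m n mu nu k))
    - ((m : ℤ) + n - k)

variable {m n mu nu}

lemma A_lt (hmu : ∀ i j : ℕ, i ≤ j → mu j ≤ mu i) {i i' : ℕ} (h : i < i') :
    A m mu i' < A m mu i := by
  have := hmu i i' h.le; simp only [A]; omega

lemma B_lt (hnu : ∀ i j : ℕ, i ≤ j → nu j ≤ nu i) {j j' : ℕ} (h : j < j') :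
    B n nu j' < B n nu j := by
  have := hnu j j' h.le; simp only [B]; omega

lemma A_anti (hmu : ∀ i j : ℕ, i ≤ j → mu j ≤ mu i) {i i' : ℕ} (h : i ≤ i') :
    A m mu i' ≤ A m mu i := by
  rcases h.lt_or_eq with h | h
  · exact (A_lt hmu h).le
  · rw [h]

lemma B_anti (hnu : ∀ i j : ℕ, i ≤ j → nu j ≤ nu i) {j j' : ℕ} (h : j ≤ j') :
    B n nu j' ≤ B n nu j := by
  rcases h.lt_or_eq with h | h
  · exact (B_lt hnu h).le
  · rw [h]

lemma posA_lt (hmu : ∀ i j : ℕ, i ≤ j → mu j ≤ mu i) {i i' : ℕ} (h : i < i') :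
    posA m n mu nu i < posA m n mu nu i' := by
  have hA := A_lt (m := m) hmu h
  have hsub : (Finset.Icc 1 n).filter (fun j => A m mu i < B n nu j) ⊆
      (Finset.Icc 1 n).filter (fun j => A m mu i' < B n nu j) := by
    intro x hx
    simp only [Finset.mem_filter] at hx ⊢
    exact ⟨hx.1, lt_trans hA hx.2⟩
  have := Finset.card_le_card hsub
  simp only [posA]; omega

lemma posB_lt (hnu : ∀ i j : ℕ, i ≤ j → nu j ≤ nu i) {j j' : ℕ} (h : j < j') :
    posB m n mu nu j < posB m n mu nu j' := by
  have hB := B_lt (n := n) hnu h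
  have hsub : (Finset.Icc 1 m).filter (fun i => B n nu j ≤ A m mu i) ⊆
      (Finset.Icc 1 m).filter (fun i => B n nu j' ≤ A m mu i) := by
    intro x hx
    simp only [Finset.mem_filter] at hx ⊢
    exact ⟨hx.1, le_trans hB.le hx.2⟩
  have := Finset.card_le_card hsub
  simp only [posB]; omega

lemma posA_le (hmu : ∀ i j : ℕ, i ≤ j → mu j ≤ mu i) {i i' : ℕ} (h : i ≤ i') :
    posA m n mu nu i ≤ posA m n mu nu i' := by
  rcases h.lt_or_eq with h | h
  · exact (posA_lt hmu h).le
  · rw [h]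

lemma posB_le (hnu : ∀ i j : ℕ, i ≤ j → nu j ≤ nu i) {j j' : ℕ} (h : j ≤ j') :
    posB m n mu nu j ≤ posB m n mu nu j' := by
  rcases h.lt_or_eq with h | h
  · exact (posB_lt hnu h).le
  · rw [h]

lemma one_le_posA {i : ℕ} (h : 1 ≤ i) : 1 ≤ posA m n mu nu i := by
  simp only [posA]; omega

lemma one_le_posB {j : ℕ} (h : 1 ≤ j) : 1 ≤ posB m n mu nu j := by
  simp only [posB]; omega

lemma posA_le_N {i : ℕ} (h : i ≤ m) : posA m n mu nu i ≤ m + n := by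
  have h1 := Finset.card_filter_le (Finset.Icc 1 n) (fun j => A m mu i < B n nu j)
  have h2 : (Finset.Icc 1 n).card = n := by rw [Nat.card_Icc]; omega
  simp only [posA]; omega

lemma posB_le_N {j : ℕ} (h : j ≤ n) : posB m n mu nu j ≤ m + n := by
  have h1 := Finset.card_filter_le (Finset.Icc 1 m) (fun i => B n nu j ≤ A m mu i)
  have h2 : (Finset.Icc 1 m).card = m := by rw [Nat.card_Icc]; omega
  simp only [posB]; omega

lemma posA_lt_posB (hmu : ∀ i j : ℕ, i ≤ j → mu j ≤ mu i)
    (hnu : ∀ i j : ℕ, i ≤ j → nu j ≤ nu i) {i j : ℕ}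
    (him : i ≤ m) (hj1 : 1 ≤ j) (hBA : B n nu j ≤ A m mu i) :
    posA m n mu nu i < posB m n mu nu j := by
  have h1 : (Finset.Icc 1 n).filter (fun j' => A m mu i < B n nu j') ⊆ Finset.Icc 1 (j - 1) := by
    intro j' hj'
    simp only [Finset.mem_filter, Finset.mem_Icc] at hj' ⊢
    have hlt : j' < j := by
      by_contra hc
      push_neg at hc
      have := B_anti (n := n) hnu hc
      linarith [hj'.2]
    omega
  have h2 : Finset.Icc 1 i ⊆ (Finset.Icc 1 m).filter (fun i' => B n nu j ≤ A m mu i') := by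
    intro i' hi'
    simp only [Finset.mem_Icc] at hi'
    simp only [Finset.mem_filter, Finset.mem_Icc]
    exact ⟨⟨hi'.1, hi'.2.trans him⟩, le_trans hBA (A_anti hmu hi'.2)⟩
  have c1 := Finset.card_le_card h1
  have c2 := Finset.card_le_card h2
  rw [Nat.card_Icc] at c1 c2
  simp only [posA, posB]; omega

lemma posB_lt_posA (hmu : ∀ i j : ℕ, i ≤ j → mu j ≤ mu i)
    (hnu : ∀ i j : ℕ, i ≤ j → nu j ≤ nu i) {i j : ℕ}
    (hjn : j ≤ n) (hi1 : 1 ≤ i) (hAB : A m mu i < B n nu j) :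
    posB m n mu nu j < posA m n mu nu i := by
  have h1 : (Finset.Icc 1 m).filter (fun i' => B n nu j ≤ A m mu i') ⊆ Finset.Icc 1 (i - 1) := by
    intro i' hi'
    simp only [Finset.mem_filter, Finset.mem_Icc] at hi' ⊢
    have hlt : i' < i := by
      by_contra hc
      push_neg at hc
      have := A_anti (m := m) hmu hc
      linarith [hi'.2]
    omega
  have h2 : Finset.Icc 1 j ⊆ (Finset.Icc 1 n).filter (fun j' => A m mu i < B n nu j') := by
    intro j' hj'
    simp only [Finset.mem_Icc] at hj'
    simp only [Finset.mem_filter, Finset.mem_Icc]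
    exact ⟨⟨hj'.1, hj'.2.trans hjn⟩, lt_of_lt_of_le hAB (B_anti hnu hj'.2)⟩
  have c1 := Finset.card_le_card h1
  have c2 := Finset.card_le_card h2
  rw [Nat.card_Icc] at c1 c2
  simp only [posA, posB]; omega

lemma posA_ne_posB (hmu : ∀ i j : ℕ, i ≤ j → mu j ≤ mu i)
    (hnu : ∀ i j : ℕ, i ≤ j → nu j ≤ nu i) {i j : ℕ}
    (hi1 : 1 ≤ i) (him : i ≤ m) (hj1 : 1 ≤ j) (hjn : j ≤ n) :
    posA m n mu nu i ≠ posB m n mu nu j := by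
  rcases le_or_gt (B n nu j) (A m mu i) with h | h
  · exact (posA_lt_posB hmu hnu him hj1 h).ne
  · exact (posB_lt_posA hmu hnu hjn hi1 h).ne'

lemma posA_injective (hmu : ∀ i j : ℕ, i ≤ j → mu j ≤ mu i) :
    Function.Injective (posA m n mu nu) := by
  intro a b hab
  rcases lt_trichotomy a b with h | h | h
  · exact absurd hab (posA_lt hmu h).ne
  · exact h
  · exact absurd hab.symm (posA_lt hmu h).ne

lemma posB_injective (hnu : ∀ i j : ℕ, i ≤ j → nu j ≤ nu i) :
    Function.Injective (posB m n mu nu) := by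
  intro a b hab
  rcases lt_trichotomy a b with h | h | h
  · exact absurd hab (posB_lt hnu h).ne
  · exact h
  · exact absurd hab.symm (posB_lt hnu h).ne

lemma card_Vset (hmu : ∀ i j : ℕ, i ≤ j → mu j ≤ mu i) : (Vset m n mu nu).card = m := by
  rw [Vset, Finset.card_image_of_injective _ (posA_injective hmu), Nat.card_Icc]; omega

lemma mem_Vset {k : ℕ} :
    k ∈ Vset m n mu nu ↔ ∃ i, 1 ≤ i ∧ i ≤ m ∧ posA m n mu nu i = k := by
  simp only [Vset, Finset.mem_image, Finset.mem_Icc]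
  constructor
  · rintro ⟨i, ⟨h1, h2⟩, h3⟩; exact ⟨i, h1, h2, h3⟩
  · rintro ⟨i, h1, h2, h3⟩; exact ⟨i, ⟨h1, h2⟩, h3⟩

lemma Vset_subset : Vset m n mu nu ⊆ Finset.Icc 1 (m + n) := by
  intro k hk
  obtain ⟨i, h1, h2, rfl⟩ := mem_Vset.mp hk
  exact Finset.mem_Icc.mpr ⟨one_le_posA h1, posA_le_N h2⟩

lemma card_Hset (hmu : ∀ i j : ℕ, i ≤ j → mu j ≤ mu i) :
    (Finset.Icc 1 (m + n) \ Vset m n mu nu).card = n := by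
  rw [Finset.card_sdiff_of_subset Vset_subset, Nat.card_Icc, card_Vset hmu]; omega

lemma Hset_eq (hmu : ∀ i j : ℕ, i ≤ j → mu j ≤ mu i)
    (hnu : ∀ i j : ℕ, i ≤ j → nu j ≤ nu i) :
    Finset.Icc 1 (m + n) \ Vset m n mu nu = (Finset.Icc 1 n).image (posB m n mu nu) := by
  symm
  apply Finset.eq_of_subset_of_card_le
  · intro k hk
    simp only [Finset.mem_image, Finset.mem_Icc] at hk
    obtain ⟨j, ⟨hj1, hjn⟩, rfl⟩ := hk
    refine Finset.mem_sdiff.mpr ⟨Finset.mem_Icc.mpr ⟨one_le_posB hj1, posB_le_N hjn⟩, ?_⟩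
    intro hmem
    obtain ⟨i, hi1, him, heq⟩ := mem_Vset.mp hmem
    exact posA_ne_posB hmu hnu hi1 him hj1 hjn heq
  · rw [Finset.card_image_of_injective _ (posB_injective hnu), Nat.card_Icc, card_Hset hmu]
    omega

lemma mem_Hset (hmu : ∀ i j : ℕ, i ≤ j → mu j ≤ mu i)
    (hnu : ∀ i j : ℕ, i ≤ j → nu j ≤ nu i) {k : ℕ} :
    k ∈ Finset.Icc 1 (m + n) \ Vset m n mu nu ↔
      ∃ j, 1 ≤ j ∧ j ≤ n ∧ posB m n mu nu j = k := by
  rw [Hset_eq hmu hnu]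
  simp only [Finset.mem_image, Finset.mem_Icc]
  constructor
  · rintro ⟨j, ⟨h1, h2⟩, h3⟩; exact ⟨j, h1, h2, h3⟩
  · rintro ⟨j, h1, h2, h3⟩; exact ⟨j, ⟨h1, h2⟩, h3⟩

lemma invA_posA (hmu : ∀ i j : ℕ, i ≤ j → mu j ≤ mu i) {i : ℕ}
    (h1 : 1 ≤ i) (h2 : i ≤ m) : invA m n mu nu (posA m n mu nu i) = i := by
  have hfil : (Finset.Icc 1 m).filter (fun i' => posA m n mu nu i' ≤ posA m n mu nu i)
      = Finset.Icc 1 i := by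
    ext i'
    simp only [Finset.mem_filter, Finset.mem_Icc]
    constructor
    · rintro ⟨⟨ha, hb⟩, hc⟩
      refine ⟨ha, ?_⟩
      by_contra hlt
      push_neg at hlt
      exact absurd hc (not_le.mpr (posA_lt hmu hlt))
    · rintro ⟨ha, hb⟩
      exact ⟨⟨ha, hb.trans h2⟩, posA_le hmu hb⟩
  rw [invA, hfil, Nat.card_Icc]; omega

lemma invB_posB (hnu : ∀ i j : ℕ, i ≤ j → nu j ≤ nu i) {j : ℕ}
    (h1 : 1 ≤ j) (h2 : j ≤ n) : invB m n mu nu (posB m n mu nu j) = j := by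
  have hfil : (Finset.Icc 1 n).filter (fun j' => posB m n mu nu j' ≤ posB m n mu nu j)
      = Finset.Icc 1 j := by
    ext j'
    simp only [Finset.mem_filter, Finset.mem_Icc]
    constructor
    · rintro ⟨⟨ha, hb⟩, hc⟩
      refine ⟨ha, ?_⟩
      by_contra hlt
      push_neg at hlt
      exact absurd hc (not_le.mpr (posB_lt hnu hlt))
    · rintro ⟨ha, hb⟩
      exact ⟨⟨ha, hb.trans h2⟩, posB_le hnu hb⟩
  rw [invB, hfil, Nat.card_Icc]; omega

lemma alph_posA (hmu : ∀ i j : ℕ, i ≤ j → mu j ≤ mu i) {i : ℕ}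
    (h1 : 1 ≤ i) (h2 : i ≤ m) :
    alph m n mu nu (posA m n mu nu i)
      = A m mu i - ((m : ℤ) + n - posA m n mu nu i) := by
  rw [alph, if_pos (mem_Vset.mpr ⟨i, h1, h2, rfl⟩), invA_posA hmu h1 h2]

lemma alph_posB (hmu : ∀ i j : ℕ, i ≤ j → mu j ≤ mu i)
    (hnu : ∀ i j : ℕ, i ≤ j → nu j ≤ nu i) {j : ℕ}
    (h1 : 1 ≤ j) (h2 : j ≤ n) :
    alph m n mu nu (posB m n mu nu j)
      = B n nu j - ((m : ℤ) + n - posB m n mu nu j) := by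
  rw [alph, if_neg, invB_posB hnu h1 h2]
  intro hmem
  obtain ⟨i, hi1, him, heq⟩ := mem_Vset.mp hmem
  exact posA_ne_posB hmu hnu hi1 him h1 h2 heq

lemma cover (hmu : ∀ i j : ℕ, i ≤ j → mu j ≤ mu i)
    (hnu : ∀ i j : ℕ, i ≤ j → nu j ≤ nu i) {k : ℕ}
    (h1 : 1 ≤ k) (h2 : k ≤ m + n) :
    (∃ i, 1 ≤ i ∧ i ≤ m ∧ posA m n mu nu i = k) ∨
      (∃ j, 1 ≤ j ∧ j ≤ n ∧ posB m n mu nu j = k) := by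
  by_cases hk : k ∈ Vset m n mu nu
  · exact Or.inl (mem_Vset.mp hk)
  · exact Or.inr ((mem_Hset hmu hnu).mp
      (Finset.mem_sdiff.mpr ⟨Finset.mem_Icc.mpr ⟨h1, h2⟩, hk⟩))

lemma step (hmu : ∀ i j : ℕ, i ≤ j → mu j ≤ mu i)
    (hnu : ∀ i j : ℕ, i ≤ j → nu j ≤ nu i) {k : ℕ}
    (h1 : 1 ≤ k) (h2 : k < m + n) :
    alph m n mu nu (k + 1) ≤ alph m n mu nu k + 1 ∧
    ((k ∈ Vset m n mu nu ↔ (k + 1) ∈ Vset m n mu nu) →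
      alph m n mu nu (k + 1) ≤ alph m n mu nu k) ∧
    (alph m n mu nu k < alph m n mu nu (k + 1) →
      k ∈ Vset m n mu nu ∧ (k + 1) ∉ Vset m n mu nu) := by
  rcases cover hmu hnu h1 h2.le with ⟨i, hi1, him, hik⟩ | ⟨j, hj1, hjn, hjk⟩
  · rcases cover hmu hnu (by omega : 1 ≤ k + 1) (by omega : k + 1 ≤ m + n) with
      ⟨i', hi'1, hi'm, hik'⟩ | ⟨j, hj1, hjn, hjk⟩
    · -- both in V
      have hii' : i < i' := by
        by_contra hc
        push_neg at hc
        have := posA_le (m := m) (n := n) (nu := nu) hmu hc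
        omega
      have e1 := alph_posA (n := n) (nu := nu) hmu hi1 him
      have e2 := alph_posA (n := n) (nu := nu) hmu hi'1 hi'm
      rw [hik] at e1
      rw [hik'] at e2
      have hA := A_lt (m := m) hmu hii'
      have hle : alph m n mu nu (k + 1) ≤ alph m n mu nu k := by omega
      exact ⟨by omega, fun _ => hle, fun hlt => absurd hlt (not_lt.mpr hle)⟩
    · -- k in V, k+1 in H
      have hBA : B n nu j ≤ A m mu i := by
        by_contra hc
        push_neg at hc
        have := posB_lt_posA hmu hnu hjn hi1 hc
        omega
      have e1 := alph_posA (n := n) (nu := nu) hmu hi1 him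
      have e2 := alph_posB (m := m) hmu hnu hj1 hjn
      rw [hik] at e1
      rw [hjk] at e2
      have hkV : k ∈ Vset m n mu nu := mem_Vset.mpr ⟨i, hi1, him, hik⟩
      have hk1V : (k + 1) ∉ Vset m n mu nu := by
        intro hmem
        obtain ⟨i', h1', h2', heq⟩ := mem_Vset.mp hmem
        exact posA_ne_posB hmu hnu h1' h2' hj1 hjn (heq.trans hjk.symm)
      exact ⟨by omega, fun hiff => absurd (hiff.mp hkV) hk1V, fun _ => ⟨hkV, hk1V⟩⟩
  · rcases cover hmu hnu (by omega : 1 ≤ k + 1) (by omega : k + 1 ≤ m + n) with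
      ⟨i, hi1, him, hik⟩ | ⟨j', hj'1, hj'n, hjk'⟩
    · -- k in H, k+1 in V
      have hAB : A m mu i < B n nu j := by
        by_contra hc
        push_neg at hc
        have := posA_lt_posB hmu hnu him hj1 hc
        omega
      have e1 := alph_posB (m := m) hmu hnu hj1 hjn
      have e2 := alph_posA (n := n) (nu := nu) hmu hi1 him
      rw [hjk] at e1
      rw [hik] at e2
      have hle : alph m n mu nu (k + 1) ≤ alph m n mu nu k := by omega
      exact ⟨by omega, fun _ => hle, fun hlt => absurd hlt (not_lt.mpr hle)⟩
    · -- both in H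
      have hjj' : j < j' := by
        by_contra hc
        push_neg at hc
        have := posB_le (m := m) (n := n) (mu := mu) hnu hc
        omega
      have e1 := alph_posB (m := m) hmu hnu hj1 hjn
      have e2 := alph_posB (m := m) hmu hnu hj'1 hj'n
      rw [hjk] at e1
      rw [hjk'] at e2
      have hB := B_lt (n := n) hnu hjj'
      have hle : alph m n mu nu (k + 1) ≤ alph m n mu nu k := by omega
      exact ⟨by omega, fun _ => hle, fun hlt => absurd hlt (not_lt.mpr hle)⟩

lemma alph_N_nonneg (hmu : ∀ i j : ℕ, i ≤ j → mu j ≤ mu i)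
    (hnu : ∀ i j : ℕ, i ≤ j → nu j ≤ nu i) :
    0 ≤ alph m n mu nu (m + n) := by
  rcases Nat.eq_zero_or_pos (m + n) with h0 | hpos
  · have hm : m = 0 := by omega
    have hn : n = 0 := by omega
    subst hm
    subst hn
    have hV : (0 : ℕ) ∉ Vset 0 0 mu nu := by
      rw [mem_Vset]
      rintro ⟨i, h1, h2, -⟩
      omega
    have hinv : invB 0 0 mu nu 0 = 0 := by simp [invB]
    simp only [alph, if_neg hV, hinv, B]
    have : (0 : ℤ) ≤ (nu 0 : ℤ) := Int.natCast_nonneg _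
    push_cast
    omega
  · rcases cover hmu hnu hpos le_rfl with ⟨i, hi1, him, hik⟩ | ⟨j, hj1, hjn, hjk⟩
    · have e := alph_posA (n := n) (nu := nu) hmu hi1 him
      rw [hik] at e
      rw [e]
      simp only [A]
      have : (0 : ℤ) ≤ (mu i : ℤ) := Int.natCast_nonneg _
      omega
    · have e := alph_posB (m := m) hmu hnu hj1 hjn
      rw [hjk] at e
      rw [e]
      simp only [B]
      have : (0 : ℤ) ≤ (nu j : ℤ) := Int.natCast_nonneg _
      omega

end OverlapAux
/-- **Visualization of pairs of partitions whose overlap is infinity**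
(Proposition 4.7): `μ ⋆_{m,n} ν = ∞` iff there are an `m`-element subset `V` of
`{1,…,m+n}` (with complement `H`) and a quasi-partition `α` associated to `V`
which is not a partition, such that `μ_i = (n + i − V_i) + α_{V_i}` and
`ν_j = (m + j − H_j) + α_{H_j}`. -/
theorem overlap_infinite_iff_quasiPartition
    {m n : ℕ} (mu nu : ℕ → ℕ) (hmu : IsPartition mu) (hnu : IsPartition nu)
    (hmul : LenLE mu m) (hnul : LenLE nu n) :
    OverlapInfinite m n mu nu ↔
      ∃ V : Finset ℕ, V ⊆ Finset.Icc 1 (m + n) ∧ V.card = m ∧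
        ∃ α : ℕ → ℤ,
          IsQuasiPartition m n (fun x => x ∈ V) α ∧
          ¬ IsPartitionSeqZ (m + n) α ∧
          (∀ i : Fin V.card,
            (mu ((i : ℕ) + 1) : ℤ) =
              ((n : ℤ) + ((i : ℕ) + 1) - ((V.orderIsoOfFin rfl i).1 : ℤ)) +
                α (V.orderIsoOfFin rfl i).1) ∧
          (∀ j : Fin (Finset.Icc 1 (m + n) \ V).card,
            (nu ((j : ℕ) + 1) : ℤ) =
              ((m : ℤ) + ((j : ℕ) + 1) -
                  (((Finset.Icc 1 (m + n) \ V).orderIsoOfFin rfl j).1 : ℤ)) +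
                α ((Finset.Icc 1 (m + n) \ V).orderIsoOfFin rfl j).1) := by
  have hmu' : ∀ i j : ℕ, i ≤ j → mu j ≤ mu i := hmu.2.1
  have hnu' : ∀ i j : ℕ, i ≤ j → nu j ≤ nu i := hnu.2.1
  constructor
  · rintro ⟨x, hxa, hxb⟩
    obtain ⟨i0, hi0, hxa'⟩ := Multiset.mem_map.mp hxa
    obtain ⟨j0, hj0, hxb'⟩ := Multiset.mem_map.mp hxb
    rw [Multiset.mem_range] at hi0 hj0
    rw [hooks] at *
    have him : i0 + 1 ≤ m := hi0
    have hjn : j0 + 1 ≤ n := hj0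
    have hAB : OverlapAux.A m mu (i0 + 1) = OverlapAux.B n nu (j0 + 1) := by
      simp only [OverlapAux.A, OverlapAux.B]
      omega
    have hcard := OverlapAux.card_Vset (m := m) (n := n) (nu := nu) hmu'
    refine ⟨OverlapAux.Vset m n mu nu, OverlapAux.Vset_subset, hcard,
      OverlapAux.alph m n mu nu, ?_, ?_, ?_, ?_⟩
    · -- quasi-partition
      refine ⟨OverlapAux.alph_N_nonneg hmu' hnu', ?_, ?_, ?_⟩
      · intro i hi1 hiN
        rintro ⟨ha, hb⟩
        have heq : i - 1 + 1 = i := by omega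
        have ha' : OverlapAux.alph m n mu nu (i - 1) <
            OverlapAux.alph m n mu nu ((i - 1) + 1) := by rw [heq]; exact ha
        have s1 := (OverlapAux.step hmu' hnu' (k := i - 1) (by omega) (by omega)).2.2 ha'
        have s2 := (OverlapAux.step hmu' hnu' (k := i) (by omega) hiN).2.2 hb
        rw [heq] at s1
        exact s1.2 s2.1
      · intro i hi1 hiN hiff
        exact (OverlapAux.step hmu' hnu' hi1 hiN).2.1 hiff
      · intro i hi1 hiN _
        exact (OverlapAux.step hmu' hnu' hi1 hiN).1
    · -- not a partition
      have hk1 : 1 ≤ OverlapAux.posA m n mu nu (i0 + 1) := OverlapAux.one_le_posA (by omega)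
      have hkN : OverlapAux.posB m n mu nu (j0 + 1) ≤ m + n := OverlapAux.posB_le_N hjn
      have hkb : OverlapAux.posB m n mu nu (j0 + 1) = OverlapAux.posA m n mu nu (i0 + 1) + 1 := by
        have hlt : OverlapAux.posA m n mu nu (i0 + 1) < OverlapAux.posB m n mu nu (j0 + 1) :=
          OverlapAux.posA_lt_posB hmu' hnu' him (by omega) hAB.symm.le
        by_contra hc
        rcases OverlapAux.cover hmu' hnu'
            (by omega : 1 ≤ OverlapAux.posA m n mu nu (i0 + 1) + 1)
            (by omega : OverlapAux.posA m n mu nu (i0 + 1) + 1 ≤ m + n) with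
          ⟨i', h1', h2', heq⟩ | ⟨j', h1', h2', heq⟩
        · have hii : i0 + 1 < i' := by
            by_contra hcc
            push_neg at hcc
            have := OverlapAux.posA_le (m := m) (n := n) (nu := nu) hmu' hcc
            omega
          have hAlt : OverlapAux.A m mu i' < OverlapAux.B n nu (j0 + 1) := by
            have := OverlapAux.A_lt (m := m) hmu' hii
            omega
          have := OverlapAux.posB_lt_posA hmu' hnu' hjn h1' hAlt
          omega
        · have hjj : j' < j0 + 1 := by
            by_contra hcc
            push_neg at hcc
            have := OverlapAux.posB_le (m := m) (n := n) (mu := mu) hnu' hcc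
            omega
          have hBlt : OverlapAux.A m mu (i0 + 1) < OverlapAux.B n nu j' := by
            have := OverlapAux.B_lt (n := n) hnu' hjj
            omega
          have := OverlapAux.posB_lt_posA hmu' hnu' h2' (by omega : 1 ≤ i0 + 1) hBlt
          omega
      have e1 := OverlapAux.alph_posA (n := n) (nu := nu) hmu' (by omega : 1 ≤ i0 + 1) him
      have e2 := OverlapAux.alph_posB (m := m) hmu' hnu' (by omega : 1 ≤ j0 + 1) hjn
      rw [hkb] at e2
      rintro ⟨hmono, -⟩
      have hmle := hmono (OverlapAux.posA m n mu nu (i0 + 1))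
        (OverlapAux.posA m n mu nu (i0 + 1) + 1) hk1 (by omega) (by omega)
      simp only [OverlapAux.A, OverlapAux.B] at hAB e1 e2
      omega
    · -- equations for mu
      have hVemb : ∀ x : Fin (OverlapAux.Vset m n mu nu).card,
          (((OverlapAux.Vset m n mu nu).orderIsoOfFin rfl x : ℕ)) =
            OverlapAux.posA m n mu nu ((x : ℕ) + 1) := by
        have hf : (fun x : Fin (OverlapAux.Vset m n mu nu).card =>
            OverlapAux.posA m n mu nu ((x : ℕ) + 1)) =
            ⇑((OverlapAux.Vset m n mu nu).orderEmbOfFin rfl) := by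
          apply Finset.orderEmbOfFin_unique
          · intro x
            have hx : (x : ℕ) < m := by have := x.isLt; omega
            exact OverlapAux.mem_Vset.mpr ⟨(x : ℕ) + 1, by omega, by omega, rfl⟩
          · intro a b hab
            exact OverlapAux.posA_lt hmu' (by omega : (a : ℕ) + 1 < (b : ℕ) + 1)
        intro x
        rw [Finset.coe_orderIsoOfFin_apply, ← hf]
      intro i
      have hx : (i : ℕ) < m := by have := i.isLt; omega
      simp only [hVemb]
      rw [OverlapAux.alph_posA (n := n) (nu := nu) hmu' (by omega) (by omega)]
      simp only [OverlapAux.A]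
      push_cast
      ring
    · -- equations for nu
      have hHcard := OverlapAux.card_Hset (m := m) (n := n) (nu := nu) hmu'
      have hHemb : ∀ x : Fin ((Finset.Icc 1 (m + n) \ OverlapAux.Vset m n mu nu)).card,
          ((((Finset.Icc 1 (m + n) \ OverlapAux.Vset m n mu nu)).orderIsoOfFin rfl x : ℕ)) =
            OverlapAux.posB m n mu nu ((x : ℕ) + 1) := by
        have hf : (fun x : Fin ((Finset.Icc 1 (m + n) \ OverlapAux.Vset m n mu nu)).card =>
            OverlapAux.posB m n mu nu ((x : ℕ) + 1)) =
            ⇑(((Finset.Icc 1 (m + n) \ OverlapAux.Vset m n mu nu)).orderEmbOfFin rfl) := by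
          apply Finset.orderEmbOfFin_unique
          · intro x
            have hx : (x : ℕ) < n := by have := x.isLt; omega
            exact (OverlapAux.mem_Hset hmu' hnu').mpr ⟨(x : ℕ) + 1, by omega, by omega, rfl⟩
          · intro a b hab
            exact OverlapAux.posB_lt hnu' (by omega : (a : ℕ) + 1 < (b : ℕ) + 1)
        intro x
        rw [Finset.coe_orderIsoOfFin_apply, ← hf]
      intro j
      have hx : (j : ℕ) < n := by have := j.isLt; omega
      simp only [hHemb]
      rw [OverlapAux.alph_posB (m := m) hmu' hnu' (by omega) (by omega)]
      simp only [OverlapAux.B]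
      push_cast
      ring
  · rintro ⟨V, hsub, hcard, α, ⟨hn0, h2, h3, h4⟩, hnp, hmuEq, hnuEq⟩
    have hDcard : (Finset.Icc 1 (m + n) \ V).card = n := by
      rw [Finset.card_sdiff_of_subset hsub, Nat.card_Icc, hcard]; omega
    have hex : ∃ k, 1 ≤ k ∧ k < m + n ∧ α k < α (k + 1) := by
      by_contra hc
      push_neg at hc
      apply hnp
      have hmono : ∀ d i, 1 ≤ i → i + d ≤ m + n → α (i + d) ≤ α i := by
        intro d
        induction d with
        | zero => intro i _ _; simp
        | succ d ih =>
          intro i h1 h2'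
          have ha := ih i h1 (by omega)
          have hb := hc (i + d) (by omega) (by omega)
          have heq : i + (d + 1) = (i + d) + 1 := by omega
          rw [heq]
          exact le_trans hb ha
      constructor
      · intro i j h1 hij hj
        have := hmono (j - i) i h1 (by omega)
        rwa [show i + (j - i) = j by omega] at this
      · intro i h1 hi
        have := hmono (m + n - i) i h1 (by omega)
        rw [show i + (m + n - i) = m + n by omega] at this
        exact le_trans hn0 this
    obtain ⟨k, hk1, hkN, hklt⟩ := hex
    have hmix : ¬(k ∈ V ↔ (k + 1) ∈ V) := fun hiff =>
      absurd (h3 k hk1 hkN hiff) (not_le.mpr hklt)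
    have hsucc : α (k + 1) = α k + 1 :=
      le_antisymm (h4 k hk1 hkN hmix) (by omega)
    by_cases hkV : k ∈ V
    · have hk1V : (k + 1) ∉ V := fun h => hmix ⟨fun _ => h, fun _ => hkV⟩
      have hk1D : (k + 1) ∈ Finset.Icc 1 (m + n) \ V :=
        Finset.mem_sdiff.mpr ⟨Finset.mem_Icc.mpr ⟨by omega, by omega⟩, hk1V⟩
      obtain ⟨i, hi⟩ : ∃ i : Fin V.card, ((V.orderIsoOfFin rfl i : ℕ)) = k :=
        ⟨(V.orderIsoOfFin rfl).symm ⟨k, hkV⟩, by simp⟩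
      obtain ⟨j, hj⟩ : ∃ j : Fin (Finset.Icc 1 (m + n) \ V).card,
          (((Finset.Icc 1 (m + n) \ V).orderIsoOfFin rfl j : ℕ)) = k + 1 :=
        ⟨((Finset.Icc 1 (m + n) \ V).orderIsoOfFin rfl).symm ⟨k + 1, hk1D⟩, by simp⟩
      have e1 := hmuEq i
      rw [hi] at e1
      have e2 := hnuEq j
      rw [hj, hsucc] at e2
      have him : (i : ℕ) + 1 ≤ m := by have := i.isLt; omega
      have hjn : (j : ℕ) + 1 ≤ n := by have := j.isLt; omega
      refine ⟨mu ((i : ℕ) + 1) + m - ((i : ℕ) + 1), ?_, ?_⟩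
      · exact Multiset.mem_map.mpr ⟨(i : ℕ), Multiset.mem_range.mpr (by omega), rfl⟩
      · have hval : mu ((i : ℕ) + 1) + m - ((i : ℕ) + 1)
            = nu ((j : ℕ) + 1) + n - ((j : ℕ) + 1) := by omega
        rw [hval]
        exact Multiset.mem_map.mpr ⟨(j : ℕ), Multiset.mem_range.mpr (by omega), rfl⟩
    · have hk1V : (k + 1) ∈ V := by
        by_contra hcc
        exact hmix ⟨fun h => absurd h hkV, fun h => absurd h hcc⟩
      have hkD : k ∈ Finset.Icc 1 (m + n) \ V :=
        Finset.mem_sdiff.mpr ⟨Finset.mem_Icc.mpr ⟨by omega, by omega⟩, hkV⟩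
      obtain ⟨i, hi⟩ : ∃ i : Fin V.card, ((V.orderIsoOfFin rfl i : ℕ)) = k + 1 :=
        ⟨(V.orderIsoOfFin rfl).symm ⟨k + 1, hk1V⟩, by simp⟩
      obtain ⟨j, hj⟩ : ∃ j : Fin (Finset.Icc 1 (m + n) \ V).card,
          (((Finset.Icc 1 (m + n) \ V).orderIsoOfFin rfl j : ℕ)) = k :=
        ⟨((Finset.Icc 1 (m + n) \ V).orderIsoOfFin rfl).symm ⟨k, hkD⟩, by simp⟩
      have e1 := hmuEq i
      rw [hi, hsucc] at e1
      have e2 := hnuEq j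
      rw [hj] at e2
      have him : (i : ℕ) + 1 ≤ m := by have := i.isLt; omega
      have hjn : (j : ℕ) + 1 ≤ n := by have := j.isLt; omega
      refine ⟨mu ((i : ℕ) + 1) + m - ((i : ℕ) + 1), ?_, ?_⟩
      · exact Multiset.mem_map.mpr ⟨(i : ℕ), Multiset.mem_range.mpr (by omega), rfl⟩
      · have hval : mu ((i : ℕ) + 1) + m - ((i : ℕ) + 1)
            = nu ((j : ℕ) + 1) + n - ((j : ℕ) + 1) := by omega
        rw [hval]
        exact Multiset.mem_map.mpr ⟨(j : ℕ), Multiset.mem_range.mpr (by omega), rfl⟩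
end

section
/- Let l, m, n be non-negative integers and let μ, ν, λ be partitions with l(μ) ≤ m, l(ν) ≤ n, λ ⊂ ⟨l^{m+n}⟩ and μ ⋆_{m,n} ν = λ. Then μ ⊂ ⟨(n+l)^m⟩ and ν ⊂ ⟨(m+l)^n⟩, and, writing μ̃ for the (n+l, m)-complement of μ, ν̃ for the (m+l, n)-complement of ν and λ̃ for the (l, m+n)-complement of λ, one has λ̃ = μ̃ ⋆_{m,n} ν̃ and ε_{m,n}(μ̃, ν̃) = (−1)^{mn} · ε_{m,n}(μ, ν). -/
open scoped Classical

/-! The largest hook `μ_1 + m - 1` of `μ` is a hook of `λ`, hence at most `λ_1 + m + n - 1`;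
this gives `μ_1 ≤ n + l`, and likewise `ν_1 ≤ m + l`.

With `c = l + m + n - 1`, the hooks of the `(A, N)`-complement of `f ⊂ ⟨A^N⟩` with
`A + N - 1 = c` are the values `c - x` for the hooks `x` of `f`, read in reverse order. As `c` is
the same for `μ`, `ν` and `λ`, complementation preserves the overlap relation; it also reverses
every comparison between a hook of `μ` and one of `ν`, and since these hooks are pairwise distinct
(those of `λ` are), the inversion counts of `(μ̃, ν̃)` and of `(μ, ν)` add up to `mn`. -/

open Finset

def hook (N : ℕ) (f : ℕ → ℕ) (i : ℕ) : ℕ := f (i + 1) + N - (i + 1)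

theorem hooks_eq_map_hook (N : ℕ) (f : ℕ → ℕ) : hooks N f = (Multiset.range N).map (hook N f) :=
  rfl

theorem overlapSign_eq_neg_one_pow (m n : ℕ) (mu nu : ℕ → ℕ) :
    overlapSign m n mu nu = (-1) ^ #{p ∈ range m ×ˢ range n | hook m mu p.1 < hook n nu p.2} :=
  rfl

theorem Multiset.map_range_reflect {α : Type*} (f : ℕ → α) (n : ℕ) :
    (Multiset.range n).map (fun i => f (n - 1 - i)) = (Multiset.range n).map f := by
  have h := congrArg ((↑) : List ℕ → Multiset ℕ) (List.reverse_range' (s := 0) (n := n))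
  rw [Multiset.coe_reverse, ← List.range_eq_range', zero_add, ← Multiset.map_coe] at h
  rw [← Function.comp_def f, ← Multiset.map_map, Multiset.range, ← h]

section Hooks

variable {N : ℕ} {f : ℕ → ℕ}

theorem hook_lt_hook (hf : Antitone f) {i j : ℕ} (hij : i < j) (hj : j < N) :
    hook N f j < hook N f i := by
  have : f (j + 1) ≤ f (i + 1) := hf (by omega)
  unfold hook
  omega

theorem hooks_nodup (hf : Antitone f) : (hooks N f).Nodup := by
  refine (Multiset.nodup_range N).map_on fun i hi j hj hij => ?_
  rw [Multiset.mem_range] at hi hj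
  rcases lt_trichotomy i j with h | h | h
  · exact absurd hij (hook_lt_hook hf h hj).ne'
  · exact h
  · exact absurd hij (hook_lt_hook hf h hi).ne

theorem hook_mem_hooks {i : ℕ} (hi : i < N) : hook N f i ∈ hooks N f :=
  Multiset.mem_map_of_mem _ (Multiset.mem_range.2 hi)

theorem le_hook_zero_of_mem_hooks (hf : Antitone f) {x : ℕ} (hx : x ∈ hooks N f) :
    x ≤ hook N f 0 := by
  obtain ⟨i, hi, rfl⟩ := Multiset.mem_map.1 hx
  rcases i.eq_zero_or_pos with rfl | hi0
  · exact le_rfl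
  · exact (hook_lt_hook hf hi0 (Multiset.mem_range.1 hi)).le

end Hooks

section Complement

variable {A N : ℕ} {f : ℕ → ℕ}

theorem lenLE_complSeq : LenLE (complSeq A N f) N := by
  intro i hi
  simp only [complSeq, pad]
  rw [if_neg (by omega), if_neg (by omega)]

theorem hook_complSeq {i : ℕ} (hi : i < N) (hf : f (N - i) ≤ A) :
    hook N (complSeq A N f) i = A + N - 1 - hook N f (N - 1 - i) := by
  simp only [hook, complSeq, pad]
  rw [if_neg i.succ_ne_zero, if_pos (by omega), show N + 1 - (i + 1) = N - i by omega,
    show N - 1 - i + 1 = N - i by omega]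
  omega

theorem hooks_complSeq (hf : ∀ i, 1 ≤ i → f i ≤ A) :
    hooks N (complSeq A N f) = (hooks N f).map (A + N - 1 - ·) := by
  rw [hooks_eq_map_hook, hooks_eq_map_hook, Multiset.map_map, ← Multiset.map_range_reflect]
  refine Multiset.map_congr rfl fun i hi => ?_
  rw [Multiset.mem_range] at hi
  rw [Function.comp_apply, hook_complSeq (by omega) (hf _ (by omega)),
    show N - 1 - (N - 1 - i) = i by omega]

end Complement

theorem IsPartition.antitone {f : ℕ → ℕ} (hf : IsPartition f) : Antitone f :=
  fun i j hij => hf.2.1 i j hij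

theorem IsPartition.le_of_part_one_le {f : ℕ → ℕ} {A : ℕ} (hf : IsPartition f) (h1 : f 1 ≤ A) :
    ∀ i, 1 ≤ i → f i ≤ A :=
  fun i hi => (hf.2.1 1 i hi).trans h1

section Overlap

variable {m n : ℕ} {mu nu lam : ℕ → ℕ}

theorem IsOverlap.symm (hov : IsOverlap m n mu nu lam) : IsOverlap n m nu mu lam := by
  unfold IsOverlap at *
  rw [add_comm n m, add_comm (hooks n nu)]
  exact hov

theorem IsOverlap.part_one_le (hov : IsOverlap m n mu nu lam) (hlam : Antitone lam)
    (hmu : LenLE mu m) : mu 1 ≤ n + lam 1 := by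
  rcases m.eq_zero_or_pos with rfl | hm
  · simp [hmu 1 one_pos]
  · have hmem : hook m mu 0 ∈ hooks (m + n) lam :=
      hov.2 ▸ Multiset.mem_add.2 (Or.inl (hook_mem_hooks hm))
    have := le_hook_zero_of_mem_hooks hlam hmem
    simp only [hook, zero_add] at this
    omega

theorem IsOverlap.disjoint_hooks (hov : IsOverlap m n mu nu lam) (hlam : Antitone lam) :
    Disjoint (hooks m mu) (hooks n nu) :=
  (Multiset.nodup_add.1 (hov.2 ▸ hooks_nodup hlam)).2.2

theorem isOverlap_complSeq {l : ℕ} (hov : IsOverlap m n mu nu lam)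
    (hmu : ∀ i, 1 ≤ i → mu i ≤ n + l) (hnu : ∀ i, 1 ≤ i → nu i ≤ m + l)
    (hlam : ∀ i, 1 ≤ i → lam i ≤ l) :
    IsOverlap m n (complSeq (n + l) m mu) (complSeq (m + l) n nu)
      (complSeq l (m + n) lam) := by
  refine ⟨lenLE_complSeq, ?_⟩
  rw [hooks_complSeq hlam, hooks_complSeq hmu, hooks_complSeq hnu, hov.2, Multiset.map_add,
    show n + l + m - 1 = l + (m + n) - 1 by omega, show m + l + n - 1 = l + (m + n) - 1 by omega]

end Overlap

theorem card_filter_reflect (m n : ℕ) (P : ℕ → ℕ → Prop) [DecidableRel P] :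
    #{p ∈ range m ×ˢ range n | P (m - 1 - p.1) (n - 1 - p.2)} =
      #{p ∈ range m ×ˢ range n | P p.1 p.2} := by
  refine card_nbij' (fun p => (m - 1 - p.1, n - 1 - p.2)) (fun p => (m - 1 - p.1, n - 1 - p.2))
    ?_ ?_ ?_ ?_ <;> rintro ⟨i, j⟩ h <;>
    simp only [mem_coe, mem_filter, mem_product, mem_range, Prod.mk.injEq] at h ⊢
  · exact ⟨⟨by omega, by omega⟩, h.2⟩
  · rw [Nat.sub_sub_self (by omega), Nat.sub_sub_self (by omega)]
    exact ⟨⟨by omega, by omega⟩, h.2⟩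
  · omega
  · omega

theorem card_filter_lt_add_card_filter_gt {m n : ℕ} {a b : ℕ → ℕ}
    (h : ∀ i < m, ∀ j < n, a i ≠ b j) :
    #{p ∈ range m ×ˢ range n | a p.1 < b p.2} + #{p ∈ range m ×ˢ range n | b p.2 < a p.1} =
      m * n := by
  have hgt : {p ∈ range m ×ˢ range n | b p.2 < a p.1} =
      {p ∈ range m ×ˢ range n | ¬a p.1 < b p.2} := by
    refine filter_congr fun p hp => ?_
    rw [mem_product, mem_range, mem_range] at hp
    have := h _ hp.1 _ hp.2
    omega
  rw [hgt, card_filter_add_card_filter_not, card_product, card_range, card_range]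

theorem overlapSign_complSeq {m n A B : ℕ} {mu nu : ℕ → ℕ} (hAB : A + m = B + n)
    (hmu : ∀ i, 1 ≤ i → mu i ≤ A) (hnu : ∀ i, 1 ≤ i → nu i ≤ B)
    (hdisj : Disjoint (hooks m mu) (hooks n nu)) :
    overlapSign m n (complSeq A m mu) (complSeq B n nu) =
      (-1) ^ (m * n) * overlapSign m n mu nu := by
  have hne : ∀ i < m, ∀ j < n, hook m mu i ≠ hook n nu j := by
    intro i hi j hj he
    exact Multiset.disjoint_left.1 hdisj (hook_mem_hooks hi) (he ▸ hook_mem_hooks hj)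
  have hflip :
      #{p ∈ range m ×ˢ range n | hook m (complSeq A m mu) p.1 < hook n (complSeq B n nu) p.2} =
        #{p ∈ range m ×ˢ range n | hook n nu p.2 < hook m mu p.1} := by
    rw [← card_filter_reflect m n (fun i j => hook n nu j < hook m mu i)]
    refine congrArg card (filter_congr fun p hp => ?_)
    rw [mem_product, mem_range, mem_range] at hp
    rw [hook_complSeq hp.1 (hmu _ (by omega)), hook_complSeq hp.2 (hnu _ (by omega))]
    have := hmu (m - 1 - p.1 + 1) (by omega)
    have := hnu (n - 1 - p.2 + 1) (by omega)
    simp only [hook]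
    omega
  rw [overlapSign_eq_neg_one_pow, overlapSign_eq_neg_one_pow, hflip,
    ← card_filter_lt_add_card_filter_gt hne, pow_add, mul_right_comm, ← pow_add,
    Even.neg_one_pow ⟨_, rfl⟩, one_mul]

theorem overlap_complement_general
    {l m n : ℕ} (mu nu lam : ℕ → ℕ)
    (hmu : IsPartition mu) (hnu : IsPartition nu) (hlam : IsPartition lam)
    (hmul : LenLE mu m) (hnul : LenLE nu n)
    (hlam1 : lam 1 ≤ l)
    (hov : IsOverlap m n mu nu lam) :
    mu 1 ≤ n + l ∧ nu 1 ≤ m + l ∧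
    IsOverlap m n (complSeq (n + l) m mu) (complSeq (m + l) n nu)
      (complSeq l (m + n) lam) ∧
    overlapSign m n (complSeq (n + l) m mu) (complSeq (m + l) n nu) =
      (-1) ^ (m * n) * overlapSign m n mu nu := by
  have hmu1 : mu 1 ≤ n + l := (hov.part_one_le hlam.antitone hmul).trans (by omega)
  have hnu1 : nu 1 ≤ m + l := (hov.symm.part_one_le hlam.antitone hnul).trans (by omega)
  have hmuA := hmu.le_of_part_one_le hmu1
  have hnuB := hnu.le_of_part_one_le hnu1
  exact ⟨hmu1, hnu1, isOverlap_complSeq hov hmuA hnuB (hlam.le_of_part_one_le hlam1),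
    overlapSign_complSeq (by omega) hmuA hnuB (hov.disjoint_hooks hlam.antitone)⟩

/-- **Overlap and complementation** (Lemma 4.10): if `μ ⋆_{m,n} ν = λ` with
`λ ⊂ ⟨l^{m+n}⟩`, then `μ ⊂ ⟨(n+l)^m⟩`, `ν ⊂ ⟨(m+l)^n⟩`,
`λ̃ = μ̃ ⋆_{m,n} ν̃` and `ε_{m,n}(μ̃, ν̃) = (−1)^{mn} ε_{m,n}(μ, ν)`. -/
theorem overlap_complement
    {l m n : ℕ} (mu nu lam : ℕ → ℕ)
    (hmu : IsPartition mu) (hnu : IsPartition nu) (hlam : IsPartition lam)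
    (hmul : LenLE mu m) (hnul : LenLE nu n)
    (hlaml : LenLE lam (m + n)) (hlam1 : lam 1 ≤ l)
    (hov : IsOverlap m n mu nu lam) :
    mu 1 ≤ n + l ∧ nu 1 ≤ m + l ∧
    IsOverlap m n (complSeq (n + l) m mu) (complSeq (m + l) n nu)
      (complSeq l (m + n) lam) ∧
    overlapSign m n (complSeq (n + l) m mu) (complSeq (m + l) n nu) =
      (-1) ^ (m * n) * overlapSign m n mu nu :=
  overlap_complement_general mu nu lam hmu hnu hlam hmul hnul hlam1 hov
end

section
/- Let m, n be non-negative integers, λ ⊂ ⟨m^n⟩ a partition, and K an increasing subsequence of (1, …, n). Set κ = sub_n(λ, K), let λ̃ be the (m,n)-complement of λ, and let c = n − l(K) be the number of elements of C_n(K). Then λ' ⋆_{m,c} sub_n(λ̃, C_n(K)) = κ', and the sign of this overlap is ε_{m,c}(λ', sub_n(λ̃, C_n(K))) = (−1)^{Σ_{i ∈ C_n(K)} λ̃_i}. -/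
open scoped Classical

/-
For `λ ⊂ ⟨m^n⟩` the numbers `λ'_i + m - i` (`1 ≤ i ≤ m`) and the reflected hooks
`m + n - 1 - (λ_j + n - j)` (`1 ≤ j ≤ n`) are `0, …, m + n - 1`, each exactly once.
The hooks of `κ = sub_n(λ, K)` are the hooks `λ_j + n - j` with `j ∈ K`, and those of
`sub_n(λ̃, C_n(K))` are the reflected hooks with `j ∉ K`. Applying the duality to `λ` and to
`κ ⊂ ⟨(m + n - l(K))^{l(K)}⟩` and cancelling the reflected hooks indexed by `K` gives the
overlap. For the sign: exactly `j - 1` reflected hooks lie below the `j`-th one, so by duality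
exactly `m - λ_j = λ̃_{n+1-j}` hooks of `λ'` do.
-/

open Finset

section Conjugate

variable {f : ℕ → ℕ} {m n i j : ℕ}

lemma conjP_of_pos (hi : 1 ≤ i) : conjP f i = conjPart f i := by
  simp only [conjP, pad]
  rw [if_neg (by omega)]

lemma conjPart_eq_card_filter (hlen : LenLE f n) (hi : 1 ≤ i) :
    conjPart f i = #{j ∈ Icc 1 n | i ≤ f j} := by
  rw [conjPart, ← Set.ncard_coe_finset]
  congr 1
  ext j
  simp only [Set.mem_ofPred_eq, coe_filter, mem_Icc]
  refine ⟨fun ⟨hj, hij⟩ => ⟨⟨hj, ?_⟩, hij⟩,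
    fun ⟨⟨hj, _⟩, hij⟩ => ⟨hj, hij⟩⟩
  by_contra! hnj
  have := hlen j hnj
  omega

lemma le_conjPart_iff (hf : Antitone f) (hlen : LenLE f n) (hi : 1 ≤ i) (hj : 1 ≤ j) :
    j ≤ conjPart f i ↔ i ≤ f j := by
  rw [conjPart_eq_card_filter hlen hi]
  constructor
  · intro hcard
    by_contra! hlt
    have hsub : {j' ∈ Icc 1 n | i ≤ f j'} ⊆ Ico 1 j := fun j' hj' => by
      simp only [mem_filter, mem_Icc, mem_Ico] at hj' ⊢
      exact ⟨hj'.1.1, lt_of_not_ge fun hjj' => by have := hf hjj'; omega⟩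
    have := card_le_card hsub
    simp only [Nat.card_Ico] at this
    omega
  · intro hij
    have hjn : j ≤ n := by
      by_contra! hnj
      have := hlen j hnj
      omega
    have hsub : Icc 1 j ⊆ {j' ∈ Icc 1 n | i ≤ f j'} := fun j' hj' => by
      simp only [mem_filter, mem_Icc] at hj' ⊢
      exact ⟨⟨hj'.1, hj'.2.trans hjn⟩, hij.trans (hf hj'.2)⟩
    simpa using card_le_card hsub

lemma conjPart_le (hlen : LenLE f n) (hi : 1 ≤ i) : conjPart f i ≤ n := by
  rw [conjPart_eq_card_filter hlen hi]
  exact (card_filter_le _ _).trans (by simp)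

lemma antitone_conjP (hlen : LenLE f n) : Antitone (conjP f) := by
  refine antitone_nat_of_succ_le fun i => ?_
  rcases Nat.eq_zero_or_pos i with rfl | hi
  · simp [conjP, pad]
  rw [conjP_of_pos (by omega), conjP_of_pos hi, conjPart_eq_card_filter hlen hi,
    conjPart_eq_card_filter hlen (by omega)]
  exact card_le_card (monotone_filter_right _ fun j h => by omega)

lemma lenLE_conjP (hf : Antitone f) (h1 : f 1 ≤ m) : LenLE (conjP f) m := by
  intro i hi
  rw [conjP_of_pos (by omega), conjPart, ← Set.ncard_empty ℕ]
  congr 1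
  ext j
  simp only [Set.mem_ofPred_eq, Set.mem_empty_iff_false, iff_false, not_and, not_le]
  exact fun hj => (hf hj).trans_lt (by omega)

end Conjugate

section Hooks

variable {f g : ℕ → ℕ} {m n N : ℕ}

lemma hooks_eq_map_Icc (N : ℕ) (g : ℕ → ℕ) :
    hooks N g = (Icc 1 N).val.map (fun j => g j + N - j) := by
  have : Icc 1 N = (range N).map (addRightEmbedding 1) := by
    ext j
    simp only [mem_Icc, mem_map, mem_range, addRightEmbedding_apply]
    exact ⟨fun h => ⟨j - 1, by omega, by omega⟩, fun ⟨a, ha, e⟩ => by omega⟩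
  rw [this, Finset.map_val, Multiset.map_map, Finset.range_val]
  rfl

lemma mem_hooks {a : ℕ} : a ∈ hooks N g ↔ ∃ j ∈ Icc 1 N, g j + N - j = a := by
  simp [hooks_eq_map_Icc]

lemma strictAntiOn_hook (hg : Antitone g) : StrictAntiOn (fun j => g j + N - j) (Set.Iic N) :=
  fun i hi j hj hij => by
    have := hg hij.le
    simp only [Set.mem_Iic] at hi hj
    show g j + N - j < g i + N - i
    omega

lemma nodup_hooks (hg : Antitone g) : (hooks N g).Nodup := by
  rw [hooks_eq_map_Icc]
  exact (nodup _).map_on fun i hi j hj h =>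
    (strictAntiOn_hook hg).injOn (by simp_all) (by simp_all) h

lemma conjP_hook_ne (hf : Antitone f) (hlen : LenLE f n) {i j : ℕ} (hi : i ∈ Icc 1 m)
    (hj : j ∈ Icc 1 n) (hfj : f j ≤ m) :
    conjP f i + m - i ≠ m + n - 1 - (f j + n - j) := by
  rw [mem_Icc] at hi hj
  rw [conjP_of_pos hi.1]
  by_cases hij : i ≤ f j
  · have := (le_conjPart_iff hf hlen hi.1 hj.1).2 hij
    omega
  · have := mt (le_conjPart_iff hf hlen hi.1 hj.1).1 hij
    omega

theorem hooks_conjP_add_map_hooks (hf : Antitone f) (hlen : LenLE f n) (h1 : f 1 ≤ m) :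
    hooks m (conjP f) + (hooks n f).map (m + n - 1 - ·) = Multiset.range (m + n) := by
  have hfm : ∀ j, 1 ≤ j → f j ≤ m := fun j hj => (hf hj).trans h1
  have hlt : ∀ a ∈ hooks n f, a < m + n := fun a ha => by
    obtain ⟨j, hj, rfl⟩ := mem_hooks.1 ha
    rw [mem_Icc] at hj
    have := hfm j hj.1
    omega
  have hnodup : (hooks m (conjP f) + (hooks n f).map (m + n - 1 - ·)).Nodup := by
    refine Multiset.nodup_add.2 ⟨nodup_hooks (antitone_conjP hlen),
      (nodup_hooks hf).map_on fun a ha b hb h => ?_, Multiset.disjoint_left.2 fun ha hb => ?_⟩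
    · have := hlt a ha
      have := hlt b hb
      omega
    · obtain ⟨i, hi, rfl⟩ := mem_hooks.1 ha
      obtain ⟨b, hb, hbi⟩ := Multiset.mem_map.1 hb
      obtain ⟨j, hj, rfl⟩ := mem_hooks.1 hb
      exact conjP_hook_ne hf hlen hi hj (hfm j (mem_Icc.1 hj).1) hbi.symm
  have hsub : hooks m (conjP f) + (hooks n f).map (m + n - 1 - ·) ⊆ Multiset.range (m + n) := by
    intro a ha
    rw [Multiset.mem_range]
    rcases Multiset.mem_add.1 ha with ha | ha
    · obtain ⟨i, hi, rfl⟩ := mem_hooks.1 ha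
      rw [mem_Icc] at hi
      have := conjPart_le hlen hi.1
      rw [conjP_of_pos hi.1]
      omega
    · obtain ⟨b, hb, rfl⟩ := Multiset.mem_map.1 ha
      have := hlt b hb
      omega
  refine Multiset.eq_of_le_of_card_le ((Multiset.le_iff_subset hnodup).2 hsub) ?_
  simp [hooks]

lemma countP_lt_range {b N : ℕ} (hb : b ≤ N) : (Multiset.range N).countP (· < b) = b := by
  have : {x ∈ range N | x < b} = range b := by
    ext x
    simp only [mem_filter, mem_range]
    omega
  rw [Multiset.countP_eq_card_filter, ← range_val, ← filter_val, this, card_val, card_range]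

lemma countP_lt_hooks_conjP (hf : Antitone f) (hlen : LenLE f n) (h1 : f 1 ≤ m) {j : ℕ}
    (hj : j ∈ Icc 1 n) :
    (hooks m (conjP f)).countP (· < m + n - 1 - (f j + n - j)) = m - f j := by
  have hfm : ∀ j, 1 ≤ j → f j ≤ m := fun j hj => (hf hj).trans h1
  rw [mem_Icc] at hj
  have hfj := hfm j hj.1
  have hearlier : {j' ∈ Icc 1 n | m + n - 1 - (f j' + n - j') < m + n - 1 - (f j + n - j)} =
      Ico 1 j := by
    ext j'
    simp only [mem_filter, mem_Icc, mem_Ico]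
    rcases lt_or_ge j' j with hjj' | hjj'
    · have := hf hjj'.le
      have := hfm j'
      omega
    · have := hf hjj'
      omega
  have hreflected : ((hooks n f).map (m + n - 1 - ·)).countP (· < m + n - 1 - (f j + n - j)) =
      j - 1 := by
    rw [← Nat.card_Ico 1 j, ← hearlier, hooks_eq_map_Icc, Multiset.map_map, Multiset.countP_map,
      card_def, filter_val]
    rfl
  have hcount := congrArg (Multiset.countP (· < m + n - 1 - (f j + n - j)))
    (hooks_conjP_add_map_hooks hf hlen h1)
  rw [Multiset.countP_add, countP_lt_range (by omega), hreflected] at hcount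
  omega

end Hooks

lemma overlapSign_eq_pow_sum_countP (m n : ℕ) (mu nu : ℕ → ℕ) :
    overlapSign m n mu nu =
      (-1) ^ ((hooks n nu).map fun b => (hooks m mu).countP (· < b)).sum := by
  unfold overlapSign hooks
  rw [card_filter, sum_product_right, sum_eq_multiset_sum, Multiset.map_map, range_val]
  refine congrArg _ (congrArg _ (Multiset.map_congr rfl fun q _ => ?_))
  rw [Function.comp_apply, Multiset.countP_map, ← range_val, ← card_filter, card_def,
    filter_val]

lemma sub_le_sub_of_strictMono {k : ℕ} {e : Fin k → ℕ} (he : StrictMono e) (a b : Fin k) :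
    (b : ℕ) - a ≤ e b - e a := by
  rcases le_or_gt a b with hab | hba
  · have := card_le_card_of_injOn e (s := Icc a b) (t := Icc (e a) (e b))
      (fun x hx => by
        simp only [coe_Icc, Set.mem_Icc] at hx ⊢
        exact ⟨he.monotone hx.1, he.monotone hx.2⟩)
      he.injective.injOn
    rw [Fin.card_Icc, Nat.card_Icc] at this
    omega
  · omega

section Subpartition

variable {N m : ℕ} {f : ℕ → ℕ} {s : Finset ℕ}

lemma lenLE_subPartF (N : ℕ) (f : ℕ → ℕ) (s : Finset ℕ) :
    LenLE (subPartF N f s) s.card := by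
  intro j hj
  simp only [subPartF, pad]
  rw [if_neg (by omega), dif_neg (by omega)]

lemma subPartF_succ (j : Fin s.card) :
    subPartF N f s (j + 1) =
      f (s.orderEmbOfFin rfl j) + (N - s.orderEmbOfFin rfl j) - (s.card - 1 - j) := by
  simp only [subPartF, pad]
  rw [if_neg (by omega), dif_pos ⟨by omega, j.2⟩]
  simp only [Nat.add_sub_cancel, Fin.eta, coe_orderIsoOfFin_apply]
  congr 1
  omega

lemma orderEmbOfFin_add_le (hs : s ⊆ Icc 1 N) (j : Fin s.card) :
    s.orderEmbOfFin rfl j + (s.card - 1 - j) ≤ N := by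
  obtain ⟨last, hlast⟩ : ∃ last : Fin s.card, (last : ℕ) = s.card - 1 :=
    ⟨⟨s.card - 1, by have := j.pos; omega⟩, rfl⟩
  have hgap := sub_le_sub_of_strictMono (s.orderEmbOfFin rfl).strictMono j last
  have hle := (s.orderEmbOfFin rfl).monotone (show j ≤ last from Fin.le_def.2 (by omega))
  have hN := (mem_Icc.1 (hs (s.orderEmbOfFin_mem rfl last))).2
  omega

lemma subPartF_hook (hs : s ⊆ Icc 1 N) (j : Fin s.card) :
    subPartF N f s (j + 1) + s.card - (j + 1) =
      f (s.orderEmbOfFin rfl j) + N - s.orderEmbOfFin rfl j := by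
  have := orderEmbOfFin_add_le hs j
  rw [subPartF_succ]
  omega

lemma hooks_subPartF (hs : s ⊆ Icc 1 N) :
    hooks s.card (subPartF N f s) = s.val.map (fun i => f i + N - i) := by
  have hrange : Multiset.range s.card = (univ : Finset (Fin s.card)).val.map Fin.val := by
    rw [← range_val, ← Nat.Iio_eq_range, ← Fin.map_valEmbedding_univ, map_val]
    rfl
  have hval : s.val = (univ : Finset (Fin s.card)).val.map (s.orderEmbOfFin rfl) := by
    conv_lhs => rw [← s.map_orderEmbOfFin_univ rfl, map_val]
    rfl
  rw [hooks, hrange, hval, Multiset.map_map, Multiset.map_map]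
  exact Multiset.map_congr rfl fun j _ => subPartF_hook hs j

lemma antitone_subPartF (hs : s ⊆ Icc 1 N) (hf : Antitone f) : Antitone (subPartF N f s) := by
  refine antitone_nat_of_succ_le fun i => ?_
  rcases Nat.eq_zero_or_pos i with rfl | hi
  · simp [subPartF, pad]
  by_cases hir : i + 1 ≤ s.card
  · obtain ⟨a, ha⟩ : ∃ a : Fin s.card, (a : ℕ) + 1 = i :=
      ⟨⟨i - 1, by omega⟩, Nat.sub_add_cancel hi⟩
    obtain ⟨b, hb⟩ : ∃ b : Fin s.card, (b : ℕ) = i := ⟨⟨i, by omega⟩, rfl⟩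
    have hab : s.orderEmbOfFin rfl a < s.orderEmbOfFin rfl b :=
      (s.orderEmbOfFin rfl).strictMono (Fin.lt_def.2 (by omega))
    have := hf hab.le
    have := orderEmbOfFin_add_le hs b
    have h1 := subPartF_succ (N := N) (f := f) a
    have h2 := subPartF_succ (N := N) (f := f) b
    rw [ha] at h1
    rw [hb] at h2 this
    omega
  · rw [lenLE_subPartF N f s (i + 1) (by omega)]
    exact Nat.zero_le _

lemma subPartF_one_le (hs : s ⊆ Icc 1 N) (hf : ∀ i ∈ s, f i ≤ m) :
    subPartF N f s 1 ≤ m + (N - s.card) := by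
  rcases Nat.eq_zero_or_pos s.card with hr | hr
  · rw [lenLE_subPartF N f s 1 (by omega)]
    exact Nat.zero_le _
  obtain ⟨first, hfirst⟩ : ∃ first : Fin s.card, (first : ℕ) = 0 := ⟨⟨0, hr⟩, rfl⟩
  have hmem := s.orderEmbOfFin_mem rfl first
  have hhook := subPartF_hook (f := f) hs first
  have := orderEmbOfFin_add_le hs first
  have := hf _ hmem
  have := (mem_Icc.1 (hs hmem)).1
  rw [hfirst, zero_add] at hhook
  omega

end Subpartition

section Complement

variable {m n : ℕ} {lam : ℕ → ℕ} {K : Finset ℕ}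

lemma complSeq_of_mem_Icc {i : ℕ} (hi : i ∈ Icc 1 n) :
    complSeq m n lam i = m - lam (n + 1 - i) := by
  rw [mem_Icc] at hi
  simp only [complSeq, pad]
  rw [if_neg (by omega), if_pos hi.2]

lemma Cfin_subset_Icc (n : ℕ) (K : Finset ℕ) : Cfin n K ⊆ Icc 1 n := by
  intro i hi
  simp only [Cfin, mem_image, mem_sdiff, mem_Icc] at hi ⊢
  omega

lemma injOn_succ_sub_Icc (n : ℕ) : Set.InjOn (fun j => n + 1 - j) ↑(Icc 1 n) :=
  fun i hi j hj h => by
    simp only [coe_Icc, Set.mem_Icc] at hi hj h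
    omega

lemma injOn_Cfin (n : ℕ) (K : Finset ℕ) : Set.InjOn (fun j => n + 1 - j) ↑(Icc 1 n \ K) :=
  (injOn_succ_sub_Icc n).mono (coe_subset.2 sdiff_subset)

lemma card_Cfin (hK : K ⊆ Icc 1 n) : (Cfin n K).card = n - K.card := by
  rw [Cfin, card_image_of_injOn (injOn_Cfin n K), card_sdiff_of_subset hK, Nat.card_Icc,
    Nat.add_sub_cancel]

lemma hooks_subPartF_complSeq_Cfin (hK : K ⊆ Icc 1 n) (hlam : ∀ j, 1 ≤ j → lam j ≤ m) :
    hooks (n - K.card) (subPartF n (complSeq m n lam) (Cfin n K)) =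
      (Icc 1 n \ K).val.map (fun j => m + n - 1 - (lam j + n - j)) := by
  rw [← card_Cfin hK, hooks_subPartF (Cfin_subset_Icc n K), Cfin,
    image_val_of_injOn (injOn_Cfin n K), Multiset.map_map]
  refine Multiset.map_congr rfl fun j hj => ?_
  simp only [mem_val, mem_sdiff, mem_Icc] at hj
  have := hlam j hj.1.1
  rw [Function.comp_apply, complSeq_of_mem_Icc (mem_Icc.2 (by omega)),
    show n + 1 - (n + 1 - j) = j by omega]
  omega

lemma sum_Cfin_complSeq :
    ∑ i ∈ Cfin n K, complSeq m n lam i = ∑ j ∈ Icc 1 n \ K, (m - lam j) := by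
  rw [Cfin, sum_image (injOn_Cfin n K)]
  refine sum_congr rfl fun j hj => ?_
  simp only [mem_sdiff, mem_Icc] at hj
  rw [complSeq_of_mem_Icc (mem_Icc.2 (by omega)), Nat.sub_sub_self (by omega)]

end Complement

lemma hooks_conjP_subPartF {m n : ℕ} {lam : ℕ → ℕ} {K : Finset ℕ} (hf : Antitone lam)
    (hlen : LenLE lam n) (h1 : lam 1 ≤ m) (hK : K ⊆ Icc 1 n) :
    hooks (m + (n - K.card)) (conjP (subPartF n lam K)) =
      hooks m (conjP lam) + (Icc 1 n \ K).val.map (fun j => m + n - 1 - (lam j + n - j)) := by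
  have hr : K.card ≤ n := by simpa using card_le_card hK
  have hsub := hooks_conjP_add_map_hooks (antitone_subPartF hK hf) (lenLE_subPartF n lam K)
    (subPartF_one_le hK fun i hi => (hf (mem_Icc.1 (hK hi)).1).trans h1)
  rw [hooks_subPartF hK, Multiset.map_map, show m + (n - K.card) + K.card = m + n by omega] at hsub
  have hfull := hooks_conjP_add_map_hooks hf hlen h1
  rw [hooks_eq_map_Icc n lam, Multiset.map_map,
    ← tsub_add_cancel_of_le (val_le_iff.2 hK), ← sdiff_val, Multiset.map_add, ← add_assoc,
    ← hsub] at hfull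
  exact (add_right_cancel hfull).symm

/-- **Overlap with a subpartition** (Lemma 4.14): for `λ ⊂ ⟨m^n⟩`, a subsequence
`K` of `(1,…,n)` and `κ = sub_n(λ, K)`, one has
`λ' ⋆_{m, n−l(K)} sub_n(λ̃, C_n(K)) = κ'`, with sign
`(−1)^{Σ_{i ∈ C_n(K)} λ̃_i}`. -/
theorem overlap_with_subpartition
    {m n : ℕ} (lam : ℕ → ℕ) (hlam : IsPartition lam) (hlen : LenLE lam n)
    (hlam1 : lam 1 ≤ m)
    (K : Finset ℕ) (hK : K ⊆ Finset.Icc 1 n) :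
    IsOverlap m (n - K.card) (conjP lam)
        (subPartF n (complSeq m n lam) (Cfin n K)) (conjP (subPartF n lam K)) ∧
    overlapSign m (n - K.card) (conjP lam) (subPartF n (complSeq m n lam) (Cfin n K)) =
      (-1) ^ (∑ i ∈ Cfin n K, complSeq m n lam i) := by
  have hanti : Antitone lam := fun i j hij => hlam.2.1 i j hij
  have hle : ∀ j, 1 ≤ j → lam j ≤ m := fun j hj => (hanti hj).trans hlam1
  have hcompl := hooks_subPartF_complSeq_Cfin hK hle
  refine ⟨⟨lenLE_conjP (antitone_subPartF hK hanti)
    (subPartF_one_le hK fun i hi => hle i (mem_Icc.1 (hK hi)).1), ?_⟩, ?_⟩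
  · rw [hooks_conjP_subPartF hanti hlen hlam1 hK, hcompl]
  · rw [overlapSign_eq_pow_sum_countP, hcompl, Multiset.map_map, sum_Cfin_complSeq,
      sum_eq_multiset_sum]
    refine congrArg _ (congrArg _ (Multiset.map_congr rfl fun j hj => ?_))
    exact countP_lt_hooks_conjP hanti hlen hlam1 (mem_sdiff.1 hj).1
end
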